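/- arXiv:2311.05719 — 7 statements merged into one kernel-verified Lean document; each statement's English description precedes it below -/
import Mathlib

section
/- Every short pyramid contains a clock; consequently, if a graph G is clock-free, then G does not contain a short pyramid as an induced subgraph. -/
open SimpleGraph

variable {V : Type*}

/-- A hole (induced cycle on at least 4 vertices) given as an embedding of the cycle `ZMod n`. -/
def IsHoleEmb (G : SimpleGraph V) (n : ℕ) (f : ZMod n → V) : Prop :=
  4 ≤ n ∧ Function.Injective f ∧
    ∀ i j, G.Adj (f i) (f j) ↔ (i = j + 1 ∨ j = i + 1)

/-- `G` contains a clock: a hole `C` together with a vertex not in `C` having two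
non-adjacent neighbours in `C`. -/
def ContainsClock (G : SimpleGraph V) : Prop :=
  ∃ (n : ℕ) (f : ZMod n → V) (v : V),
    IsHoleEmb G n f ∧ (∀ i, v ≠ f i) ∧
      ∃ i j, G.Adj v (f i) ∧ G.Adj v (f j) ∧ f i ≠ f j ∧ ¬ G.Adj (f i) (f j)

def ClockFree (G : SimpleGraph V) : Prop := ¬ ContainsClock G

/-- `G` has no induced diamond (`K₄` minus an edge). -/
def DiamondFree (G : SimpleGraph V) : Prop :=
  ¬ ∃ a b c d : V, a ≠ b ∧ a ≠ c ∧ a ≠ d ∧ b ≠ c ∧ b ≠ d ∧ c ≠ d ∧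
    G.Adj a b ∧ G.Adj a c ∧ G.Adj a d ∧ G.Adj b c ∧ G.Adj b d ∧ ¬ G.Adj c d

/-- `X` is a cutset of `G`: removing `X` leaves a non-empty disconnected graph. -/
def IsCutset (G : SimpleGraph V) (X : Set V) : Prop :=
  (Xᶜ : Set V).Nonempty ∧ ¬ (G.induce (Xᶜ : Set V)).Connected

def HasStarCutset (G : SimpleGraph V) : Prop :=
  ∃ X : Set V, IsCutset G X ∧ ∃ x ∈ X, ∀ y ∈ X, y = x ∨ G.Adj x y

def HasCliqueCutset (G : SimpleGraph V) : Prop :=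
  ∃ X : Set V, IsCutset G X ∧ G.IsClique X

/-- `X` separates `Y` from `Z`: every path with one end in `Y` and the other in `Z`
contains a vertex of `X`. -/
def Separates (G : SimpleGraph V) (X Y Z : Set V) : Prop :=
  ∀ y ∈ Y, ∀ z ∈ Z, ∀ p : G.Walk y z, p.IsPath → ∃ x ∈ X, x ∈ p.support

def IsClawCenter (G : SimpleGraph V) (v : V) : Prop :=
  ∃ x y z, G.Adj v x ∧ G.Adj v y ∧ G.Adj v z ∧ x ≠ y ∧ x ≠ z ∧ y ≠ z ∧
    ¬ G.Adj x y ∧ ¬ G.Adj x z ∧ ¬ G.Adj y z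

/-- An induced path on `n+1` vertices given as a function from `Fin (n+1)`. -/
def IsPathEmb (G : SimpleGraph V) (n : ℕ) (f : Fin (n+1) → V) : Prop :=
  Function.Injective f ∧
    ∀ i j, G.Adj (f i) (f j) ↔ ((i : ℕ) + 1 = (j : ℕ) ∨ (j : ℕ) + 1 = (i : ℕ))

/-- Cross conditions between two paths of a pyramid sharing only the apex (index 0):
off-apex parts are disjoint and the only possible edge joins the two far ends. -/
def PyrNoCross (G : SimpleGraph V) {n m : ℕ} (f : Fin (n+1) → V) (g : Fin (m+1) → V) : Prop :=
  ∀ i j, i ≠ 0 → j ≠ 0 →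
    f i ≠ g j ∧ (G.Adj (f i) (g j) → i = Fin.last n ∧ j = Fin.last m)

/-- Cross conditions between two paths of a theta: the interiors are disjoint and
anticomplete. -/
def ThetaNoCross (G : SimpleGraph V) {n m : ℕ} (f : Fin (n+1) → V) (g : Fin (m+1) → V) : Prop :=
  ∀ i j, i ≠ 0 → i ≠ Fin.last n → j ≠ 0 → j ≠ Fin.last m →
    f i ≠ g j ∧ ¬ G.Adj (f i) (g j)

/-- Cross conditions between two paths of a prism: they are disjoint and the only
edges join the two first ends or the two last ends. -/
def PrismNoCross (G : SimpleGraph V) {n m : ℕ} (f : Fin (n+1) → V) (g : Fin (m+1) → V) : Prop :=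
  ∀ i j, f i ≠ g j ∧
    (G.Adj (f i) (g j) → (i = 0 ∧ j = 0) ∨ (i = Fin.last n ∧ j = Fin.last m))

/-- A pyramid with apex `a`, given by three induced paths from `a` to a triangle. -/
def PyramidSpec (G : SimpleGraph V) (a : V) (n₁ n₂ n₃ : ℕ)
    (f₁ : Fin (n₁+1) → V) (f₂ : Fin (n₂+1) → V) (f₃ : Fin (n₃+1) → V) : Prop :=
  IsPathEmb G n₁ f₁ ∧ IsPathEmb G n₂ f₂ ∧ IsPathEmb G n₃ f₃ ∧
  f₁ 0 = a ∧ f₂ 0 = a ∧ f₃ 0 = a ∧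
  1 ≤ n₁ ∧ 1 ≤ n₂ ∧ 1 ≤ n₃ ∧
  G.Adj (f₁ (Fin.last n₁)) (f₂ (Fin.last n₂)) ∧
  G.Adj (f₂ (Fin.last n₂)) (f₃ (Fin.last n₃)) ∧
  G.Adj (f₁ (Fin.last n₁)) (f₃ (Fin.last n₃)) ∧
  ¬(n₁ = 1 ∧ n₂ = 1) ∧ ¬(n₁ = 1 ∧ n₃ = 1) ∧ ¬(n₂ = 1 ∧ n₃ = 1) ∧
  PyrNoCross G f₁ f₂ ∧ PyrNoCross G f₁ f₃ ∧ PyrNoCross G f₂ f₃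

def IsPyramidWithApex (G : SimpleGraph V) (Q : Set V) (a : V) : Prop :=
  ∃ (n₁ n₂ n₃ : ℕ) (f₁ : Fin (n₁+1) → V) (f₂ : Fin (n₂+1) → V) (f₃ : Fin (n₃+1) → V),
    PyramidSpec G a n₁ n₂ n₃ f₁ f₂ f₃ ∧
    Q = Set.range f₁ ∪ Set.range f₂ ∪ Set.range f₃

/-- A short pyramid: a pyramid one of whose paths has length exactly one. -/
def IsShortPyramidWithApex (G : SimpleGraph V) (Q : Set V) (a : V) : Prop :=
  ∃ (n₁ n₂ n₃ : ℕ) (f₁ : Fin (n₁+1) → V) (f₂ : Fin (n₂+1) → V) (f₃ : Fin (n₃+1) → V),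
    PyramidSpec G a n₁ n₂ n₃ f₁ f₂ f₃ ∧ (n₁ = 1 ∨ n₂ = 1 ∨ n₃ = 1) ∧
    Q = Set.range f₁ ∪ Set.range f₂ ∪ Set.range f₃

/-- A theta with ends `a, b`, given by three induced paths from `a` to `b` with
pairwise disjoint, pairwise anticomplete interiors. -/
def ThetaSpec (G : SimpleGraph V) (a b : V) (n₁ n₂ n₃ : ℕ)
    (f₁ : Fin (n₁+1) → V) (f₂ : Fin (n₂+1) → V) (f₃ : Fin (n₃+1) → V) : Prop :=
  IsPathEmb G n₁ f₁ ∧ IsPathEmb G n₂ f₂ ∧ IsPathEmb G n₃ f₃ ∧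
  f₁ 0 = a ∧ f₂ 0 = a ∧ f₃ 0 = a ∧
  f₁ (Fin.last n₁) = b ∧ f₂ (Fin.last n₂) = b ∧ f₃ (Fin.last n₃) = b ∧
  1 ≤ n₁ ∧ 1 ≤ n₂ ∧ 1 ≤ n₃ ∧ a ≠ b ∧ ¬ G.Adj a b ∧
  ThetaNoCross G f₁ f₂ ∧ ThetaNoCross G f₁ f₃ ∧ ThetaNoCross G f₂ f₃

def IsThetaWithEnds (G : SimpleGraph V) (Q : Set V) (a b : V) : Prop :=
  ∃ (n₁ n₂ n₃ : ℕ) (f₁ : Fin (n₁+1) → V) (f₂ : Fin (n₂+1) → V) (f₃ : Fin (n₃+1) → V),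
    ThetaSpec G a b n₁ n₂ n₃ f₁ f₂ f₃ ∧
    Q = Set.range f₁ ∪ Set.range f₂ ∪ Set.range f₃

/-- A prism: two disjoint triangles joined by three disjoint induced paths with
no other edges between them. -/
def IsPrismOn (G : SimpleGraph V) (Q : Set V) : Prop :=
  ∃ (n₁ n₂ n₃ : ℕ) (f₁ : Fin (n₁+1) → V) (f₂ : Fin (n₂+1) → V) (f₃ : Fin (n₃+1) → V),
    IsPathEmb G n₁ f₁ ∧ IsPathEmb G n₂ f₂ ∧ IsPathEmb G n₃ f₃ ∧
    1 ≤ n₁ ∧ 1 ≤ n₂ ∧ 1 ≤ n₃ ∧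
    G.Adj (f₁ 0) (f₂ 0) ∧ G.Adj (f₂ 0) (f₃ 0) ∧ G.Adj (f₁ 0) (f₃ 0) ∧
    G.Adj (f₁ (Fin.last n₁)) (f₂ (Fin.last n₂)) ∧
    G.Adj (f₂ (Fin.last n₂)) (f₃ (Fin.last n₃)) ∧
    G.Adj (f₁ (Fin.last n₁)) (f₃ (Fin.last n₃)) ∧
    PrismNoCross G f₁ f₂ ∧ PrismNoCross G f₁ f₃ ∧ PrismNoCross G f₂ f₃ ∧
    Q = Set.range f₁ ∪ Set.range f₂ ∪ Set.range f₃

/-- A three-path configuration: a theta, a prism, or a pyramid. -/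
def IsThreePathConfig (G : SimpleGraph V) (Q : Set V) : Prop :=
  (∃ a b, IsThetaWithEnds G Q a b) ∨ IsPrismOn G Q ∨ (∃ a, IsPyramidWithApex G Q a)

/-- `D` is a connected component of the induced subgraph `G[S]`. -/
def IsComponentOf (G : SimpleGraph V) (S D : Set V) : Prop :=
  D.Nonempty ∧ D ⊆ S ∧ (G.induce D).Connected ∧
    ∀ u ∈ D, ∀ v ∈ S, v ∉ D → ¬ G.Adj u v

/-- The weight of a set of vertices. -/
noncomputable def wSum [Fintype V] (w : V → ℝ) (S : Set V) : ℝ :=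
  ∑ v, S.indicator w v

/-- A weight function: values in `[0,1]` summing to `1`. -/
def IsWeightFun [Fintype V] (w : V → ℝ) : Prop :=
  (∀ v, 0 ≤ w v ∧ w v ≤ 1) ∧ ∑ v, w v = 1

/-- `X` is a `(w,c)`-balanced separator: every component of `G \ X` has weight at most `c`. -/
def IsBalancedSep [Fintype V] (G : SimpleGraph V) (w : V → ℝ) (c : ℝ) (X : Set V) : Prop :=
  ∀ D : Set V, IsComponentOf G (Xᶜ) D → wSum w D ≤ c

/-- `X` is a `(w,G)`-shield for `X'`, phrased via the heavy components `B`, `B'`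
of the canonical separations. -/
def IsShield [Fintype V] (G : SimpleGraph V) (w : V → ℝ) (X X' : Set V) : Prop :=
  ∃ B B' : Set V,
    IsComponentOf G (Xᶜ) B ∧ 1/2 < wSum w B ∧
    IsComponentOf G (X'ᶜ) B' ∧ 1/2 < wSum w B' ∧
    ((B ∪ X ⊂ B' ∪ X') ∨ (B ∪ X = B' ∪ X' ∧ B' ⊂ B))

/-- The central bag `β(G,w,𝒳)`: the intersection of the sets `B ∪ C` over canonical
separations `(A,C,B)` of members of `𝒳`. -/
def CentralBag [Fintype V] (G : SimpleGraph V) (w : V → ℝ) (𝓧 : Set (Set V)) : Set V :=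
  {v | ∀ X ∈ 𝓧, ∀ B : Set V, IsComponentOf G (Xᶜ) B → 1/2 < wSum w B → v ∈ B ∪ X}

/-- Two separations `(A,C,B)` and `(A',C',B')` are loosely non-crossing: no path has
one end in `A ∩ C'`, the other in `A' ∩ C`, and interior in `A ∩ A'`. -/
def LooselyNonCrossing (G : SimpleGraph V) (A C A' C' : Set V) : Prop :=
  ¬ ∃ (u v : V) (p : G.Walk u v), p.IsPath ∧ u ∈ A ∩ C' ∧ v ∈ A' ∩ C ∧
    ∀ x ∈ p.support, x ≠ u → x ≠ v → x ∈ A ∩ A'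

/-- `G` has a tree decomposition of width at most `r`. -/
def HasTreeDecompOfWidthLE (G : SimpleGraph V) (r : ℝ) : Prop :=
  ∃ (ι : Type) (T : SimpleGraph ι) (τ : ι → Set V),
    T.IsTree ∧
    (∀ v : V, ∃ t, v ∈ τ t) ∧
    (∀ u v : V, G.Adj u v → ∃ t, u ∈ τ t ∧ v ∈ τ t) ∧
    (∀ v : V, (T.induce {t | v ∈ τ t}).Connected) ∧
    (∀ t, ((τ t).ncard : ℝ) - 1 ≤ r)
lemma pyrNoCross_symm {G : SimpleGraph V} {n m : ℕ} {f : Fin (n+1) → V} {g : Fin (m+1) → V}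
    (h : PyrNoCross G f g) : PyrNoCross G g f := by
  intro i j hi hj
  obtain ⟨h1, h2⟩ := h j i hj hi
  exact ⟨h1.symm, fun hadj => (h2 hadj.symm).symm⟩

/-- Auxiliary hole map for the short pyramid: go along `f₂` then back along `f₃`. -/
private def holeF (n₂ n₃ : ℕ) (f₂ : Fin (n₂+1) → V) (f₃ : Fin (n₃+1) → V) (k : ℕ) : V :=
  if h : k ≤ n₂ then f₂ ⟨k, by omega⟩
  else if h' : k ≤ n₂ + n₃ then f₃ ⟨n₂ + n₃ + 1 - k, by omega⟩
  else f₂ 0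

private lemma holeF_lo {n₂ n₃ : ℕ} {f₂ : Fin (n₂+1) → V} {f₃ : Fin (n₃+1) → V}
    {k : ℕ} (hk : k ≤ n₂) : holeF n₂ n₃ f₂ f₃ k = f₂ ⟨k, by omega⟩ := dif_pos hk

private lemma holeF_hi {n₂ n₃ : ℕ} {f₂ : Fin (n₂+1) → V} {f₃ : Fin (n₃+1) → V}
    {k : ℕ} (hk1 : n₂ < k) (hk2 : k ≤ n₂ + n₃) :
    holeF n₂ n₃ f₂ f₃ k = f₃ ⟨n₂ + n₃ + 1 - k, by omega⟩ := by
  rw [holeF, dif_neg (by omega), dif_pos hk2]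

lemma short_pyramid_key (G : SimpleGraph V) (a : V) (n₂ n₃ : ℕ)
    (f₁ : Fin (1+1) → V) (f₂ : Fin (n₂+1) → V) (f₃ : Fin (n₃+1) → V)
    (hp1 : IsPathEmb G 1 f₁) (hp2 : IsPathEmb G n₂ f₂) (hp3 : IsPathEmb G n₃ f₃)
    (ha1 : f₁ 0 = a) (ha2 : f₂ 0 = a) (ha3 : f₃ 0 = a)
    (hn2 : 2 ≤ n₂) (hn3 : 2 ≤ n₃)
    (e12 : G.Adj (f₁ (Fin.last 1)) (f₂ (Fin.last n₂)))
    (e23 : G.Adj (f₂ (Fin.last n₂)) (f₃ (Fin.last n₃)))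
    (c12 : PyrNoCross G f₁ f₂) (c13 : PyrNoCross G f₁ f₃) (c23 : PyrNoCross G f₂ f₃) :
    ContainsClock G := by
  set n : ℕ := n₂ + n₃ + 1 with hn
  haveI : NeZero n := ⟨by omega⟩
  haveI : Fact (1 < n) := ⟨by omega⟩
  set F : ℕ → V := holeF n₂ n₃ f₂ f₃ with hF
  -- basic Fin facts
  have hne : ∀ (m : ℕ) (k : ℕ) (hk : k < m + 1), 1 ≤ k → (⟨k, hk⟩ : Fin (m+1)) ≠ 0 := by
    intro m k hk h1 h
    have := congrArg Fin.val h
    simp at this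
    omega
  have hlast2 : (⟨n₂, by omega⟩ : Fin (n₂+1)) = Fin.last n₂ := rfl
  have hlast3 : (⟨n₃, by omega⟩ : Fin (n₃+1)) = Fin.last n₃ := rfl
  -- injectivity of F on [0, n₂+n₃]
  have hFinj : ∀ k l, k ≤ n₂ + n₃ → l ≤ n₂ + n₃ → F k = F l → k = l := by
    intro k l hk hl h
    rw [hF] at h
    rcases le_or_gt k n₂ with hk2 | hk2 <;> rcases le_or_gt l n₂ with hl2 | hl2
    · rw [holeF_lo hk2, holeF_lo hl2] at h
      have := hp2.1 h
      simpa [Fin.ext_iff] using this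
    · rw [holeF_lo hk2, holeF_hi hl2 hl] at h
      rcases Nat.eq_zero_or_pos k with rfl | hk1
      · exfalso
        have h0 : f₃ (0 : Fin (n₃+1)) = f₃ ⟨n₂ + n₃ + 1 - l, by omega⟩ := by
          rw [ha3, ← ha2]; exact h
        have := hp3.1 h0
        have := congrArg Fin.val this
        simp at this
        omega
      · exact absurd h (c23 ⟨k, by omega⟩ ⟨n₂ + n₃ + 1 - l, by omega⟩
          (hne _ _ _ hk1) (hne _ _ _ (by omega))).1
    · rw [holeF_hi hk2 hk, holeF_lo hl2] at h
      rcases Nat.eq_zero_or_pos l with rfl | hl1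
      · exfalso
        have h0 : f₃ (0 : Fin (n₃+1)) = f₃ ⟨n₂ + n₃ + 1 - k, by omega⟩ := by
          rw [ha3, ← ha2]; exact h.symm
        have := hp3.1 h0
        have := congrArg Fin.val this
        simp at this
        omega
      · exact absurd h.symm (c23 ⟨l, by omega⟩ ⟨n₂ + n₃ + 1 - k, by omega⟩
          (hne _ _ _ hl1) (hne _ _ _ (by omega))).1
    · rw [holeF_hi hk2 hk, holeF_hi hl2 hl] at h
      have := hp3.1 h
      have := congrArg Fin.val this
      simp at this
      omega
  -- the mixed adjacency case
  have hmix : ∀ k l, k ≤ n₂ → n₂ < l → l ≤ n₂ + n₃ →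
      (G.Adj (F k) (F l) ↔ (k + 1 = l ∨ (k = 0 ∧ l = n₂ + n₃))) := by
    intro k l hk hl1 hl2
    rw [hF, holeF_lo hk, holeF_hi hl1 hl2]
    rcases Nat.eq_zero_or_pos k with rfl | hk1
    · have h0 : f₂ (⟨0, by omega⟩ : Fin (n₂+1)) = f₃ 0 := by
        have : (⟨0, by omega⟩ : Fin (n₂+1)) = 0 := rfl
        rw [this, ha2, ← ha3]
      rw [h0, hp3.2]
      constructor
      · intro h
        have h' : 0 + 1 = n₂ + n₃ + 1 - l ∨ n₂ + n₃ + 1 - l + 1 = 0 := h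
        right; exact ⟨rfl, by omega⟩
      · rintro (h | ⟨-, h⟩)
        · omega
        · left
          show (0 : ℕ) + 1 = n₂ + n₃ + 1 - l
          omega
    · constructor
      · intro h
        obtain ⟨h1, h2⟩ := (c23 _ _ (hne _ _ _ hk1) (hne _ _ _ (by omega))).2 h
        have h1' := congrArg Fin.val h1
        have h2' := congrArg Fin.val h2
        simp [Fin.last] at h1' h2'
        left; omega
      · rintro (h | ⟨h, -⟩)
        · convert e23 using 2
          · exact Fin.ext (by simp [Fin.last]; omega)
          · exact Fin.ext (by simp [Fin.last]; omega)
        · omega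
  -- adjacency of F on [0, n₂+n₃]
  have hFadj : ∀ k l, k ≤ n₂ + n₃ → l ≤ n₂ + n₃ →
      (G.Adj (F k) (F l) ↔ (k + 1 = l ∨ l + 1 = k ∨ (k = 0 ∧ l = n₂ + n₃) ∨
        (l = 0 ∧ k = n₂ + n₃))) := by
    intro k l hk hl
    rcases le_or_gt k n₂ with hk2 | hk2 <;> rcases le_or_gt l n₂ with hl2 | hl2
    · rw [hF, holeF_lo hk2, holeF_lo hl2, hp2.2]
      show (k + 1 = l ∨ l + 1 = k) ↔ _
      omega
    · rw [hmix k l hk2 hl2 hl]; omega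
    · rw [adj_comm, hmix l k hl2 hk2 hk]; omega
    · rw [hF, holeF_hi hk2 hk, holeF_hi hl2 hl, hp3.2]
      show (n₂ + n₃ + 1 - k + 1 = n₂ + n₃ + 1 - l ∨ n₂ + n₃ + 1 - l + 1 = n₂ + n₃ + 1 - k) ↔ _
      omega
  -- v = f₁ 1 is not on the hole
  have hv : ∀ k, k ≤ n₂ + n₃ → f₁ 1 ≠ F k := by
    intro k hk
    rw [hF]
    rcases le_or_gt k n₂ with hk2 | hk2
    · rw [holeF_lo hk2]
      rcases Nat.eq_zero_or_pos k with rfl | hk1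
      · have : (⟨0, by omega⟩ : Fin (n₂+1)) = 0 := rfl
        rw [this, ha2, ← ha1]
        intro h
        have := hp1.1 h
        simp at this
      · exact (c12 1 ⟨k, by omega⟩ (by decide) (hne _ _ _ hk1)).1
    · rw [holeF_hi hk2 hk]
      exact (c13 1 ⟨n₂ + n₃ + 1 - k, by omega⟩ (by decide) (hne _ _ _ (by omega))).1
  -- translate ZMod successor to values
  have hsucc : ∀ i j : ZMod n, i = j + 1 ↔
      (i.val = j.val + 1 ∨ (j.val + 1 = n ∧ i.val = 0)) := by
    intro i j
    have hjlt := ZMod.val_lt j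
    have hilt := ZMod.val_lt i
    constructor
    · rintro rfl
      rw [ZMod.val_add, ZMod.val_one]
      rcases eq_or_ne (j.val + 1) n with h | h
      · right; exact ⟨h, by rw [h, Nat.mod_self]⟩
      · left; exact Nat.mod_eq_of_lt (by omega)
    · intro h
      apply ZMod.val_injective
      rw [ZMod.val_add, ZMod.val_one]
      rcases h with h | ⟨h1, h2⟩
      · rw [Nat.mod_eq_of_lt (by omega)]; exact h
      · rw [h1, Nat.mod_self, h2]
  have hvalle : ∀ i : ZMod n, i.val ≤ n₂ + n₃ := by
    intro i; have := ZMod.val_lt i; omega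
  have hval0 : (0 : ZMod n).val = 0 := ZMod.val_zero
  have hvaln2 : ((n₂ : ZMod n)).val = n₂ := ZMod.val_natCast_of_lt (by omega)
  refine ⟨n, fun i => F i.val, f₁ 1, ⟨by omega, ?_, ?_⟩, ?_, 0, (n₂ : ZMod n), ?_, ?_, ?_, ?_⟩
  · intro i j h
    exact ZMod.val_injective n (hFinj i.val j.val (hvalle i) (hvalle j) h)
  · intro i j
    rw [hFadj i.val j.val (hvalle i) (hvalle j), hsucc i j, hsucc j i]
    have := ZMod.val_lt i; have := ZMod.val_lt j
    omega
  · intro i; exact hv i.val (hvalle i)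
  · show G.Adj (f₁ 1) (F (0 : ZMod n).val)
    rw [hval0, hF, holeF_lo (by omega)]
    have h0 : (⟨0, by omega⟩ : Fin (n₂+1)) = 0 := rfl
    rw [h0, ha2, ← ha1, hp1.2]
    right; rfl
  · show G.Adj (f₁ 1) (F ((n₂ : ZMod n)).val)
    rw [hvaln2, hF, holeF_lo le_rfl, hlast2]
    have : f₁ (Fin.last 1) = f₁ 1 := rfl
    rw [← this]
    exact e12
  · show F (0 : ZMod n).val ≠ F ((n₂ : ZMod n)).val
    rw [hval0, hvaln2]
    intro h
    have := hFinj 0 n₂ (by omega) (by omega) h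
    omega
  · show ¬ G.Adj (F (0 : ZMod n).val) (F ((n₂ : ZMod n)).val)
    rw [hval0, hvaln2, hFadj 0 n₂ (by omega) (by omega)]
    omega

/-- Every short pyramid contains a clock; consequently, a clock-free graph contains
no induced short pyramid. -/
theorem short_pyramid_contains_clock (G : SimpleGraph V) :
    ((∃ (Q : Set V) (a : V), IsShortPyramidWithApex G Q a) → ContainsClock G) ∧
    (ClockFree G → ¬ ∃ (Q : Set V) (a : V), IsShortPyramidWithApex G Q a) := by
  have main : (∃ (Q : Set V) (a : V), IsShortPyramidWithApex G Q a) → ContainsClock G := by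
    rintro ⟨Q, a, n₁, n₂, n₃, f₁, f₂, f₃,
      ⟨hp1, hp2, hp3, ha1, ha2, ha3, hn1, hn2, hn3, e12, e23, e13, h12, h13, h23,
        c12, c13, c23⟩, hshort, -⟩
    rcases hshort with rfl | rfl | rfl
    · exact short_pyramid_key G a n₂ n₃ f₁ f₂ f₃ hp1 hp2 hp3 ha1 ha2 ha3
        (by omega) (by omega) e12 e23 c12 c13 c23
    · exact short_pyramid_key G a n₁ n₃ f₂ f₁ f₃ hp2 hp1 hp3 ha2 ha1 ha3
        (by omega) (by omega) e12.symm e13 (pyrNoCross_symm c12) c23 c13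
    · exact short_pyramid_key G a n₁ n₂ f₃ f₁ f₂ hp3 hp1 hp2 ha3 ha1 ha2
        (by omega) (by omega) e13.symm e12 (pyrNoCross_symm c13) (pyrNoCross_symm c23) c12
  exact ⟨main, fun hcf h => hcf (main h)⟩
end

section
/- Let G be a clock-free graph and let P be an induced path in G with an end a, where y is the neighbour of a in P. Let x and v be neighbours of a not in P such that {x, y, v} is a stable (independent) set. Then at least one of x and v has no neighbour in P \ {a}. -/
open SimpleGraph

variable {V : Type*}

/-! If both `x` and `v` had neighbours in `P \ {a}`, let `f kx` and `f kv` be their first ones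
after `a`; neither is `y`, so `2 ≤ kx, kv`, say `kx ≤ kv`. Then `v, f 0, …, f kv` is a hole and `x`
sees its non-adjacent vertices `f 0` and `f kx`: a clock. -/

theorem ZMod.eq_add_one_iff_val {N : ℕ} [NeZero N] (hN : 2 ≤ N) (i j : ZMod N) :
    i = j + 1 ↔ i.val = j.val + 1 ∨ i.val + N = j.val + 1 := by
  have : Fact (1 < N) := ⟨hN⟩
  have hi := i.val_lt
  have hj := j.val_lt
  rw [← ZMod.val_injective N |>.eq_iff, ZMod.val_add, ZMod.val_one]
  rcases Nat.lt_or_ge (j.val + 1) N with h | h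
  · rw [Nat.mod_eq_of_lt h]; omega
  · rw [show j.val + 1 = N by omega, Nat.mod_self]; omega

namespace SimpleGraph

variable {G : SimpleGraph V}

/-- For `s, t < N`, `s + 1 = t + N` says `s = N - 1` and `t = 0`: the edge closing the cycle. -/
theorem isHoleEmb_of_nat {N : ℕ} (hN : 4 ≤ N) {h : ℕ → V}
    (hinj : ∀ s < N, ∀ t < N, h s = h t → s = t)
    (hadj : ∀ s < N, ∀ t < N,
      G.Adj (h s) (h t) ↔ s + 1 = t ∨ t + 1 = s ∨ s + 1 = t + N ∨ t + 1 = s + N) :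
    IsHoleEmb G N (fun i => h i.val) := by
  have : NeZero N := ⟨by omega⟩
  refine ⟨hN, fun i j hij => ZMod.val_injective N (hinj _ i.val_lt _ j.val_lt hij), fun i j => ?_⟩
  rw [hadj _ i.val_lt _ j.val_lt, ZMod.eq_add_one_iff_val (by omega),
    ZMod.eq_add_one_iff_val (by omega)]
  omega

theorem ClockFree.eq_or_adj_of_isHoleEmb (hG : ClockFree G) {N : ℕ} {h : ℕ → V}
    (hC : IsHoleEmb G N (fun i => h i.val)) {w : V} (hw : ∀ s < N, w ≠ h s)
    {s t : ℕ} (hs : s < N) (ht : t < N) (hws : G.Adj w (h s)) (hwt : G.Adj w (h t)) :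
    h s = h t ∨ G.Adj (h s) (h t) := by
  by_contra! hst
  have : NeZero N := ⟨by omega⟩
  have hval : ∀ r < N, ((r : ZMod N)).val = r := fun r hr => ZMod.val_cast_of_lt hr
  refine hG ⟨N, _, w, hC, fun i => hw _ i.val_lt, s, t, ?_⟩
  simp only [hval s hs, hval t ht]
  exact ⟨hws, hwt, hst⟩

theorem IsPathEmb.castLE {n k : ℕ} {f : Fin (n+1) → V} (hf : IsPathEmb G n f) (hkn : k ≤ n) :
    IsPathEmb G k (f ∘ Fin.castLE (by omega)) :=
  ⟨hf.1.comp (Fin.castLE_injective _), fun _ _ => hf.2 _ _⟩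

/-- The cycle `p 0, …, p k, u` read off `ℕ`; every index beyond `k + 1` also gives `u`. -/
def closePath {k : ℕ} (p : Fin (k+1) → V) (u : V) (s : ℕ) : V :=
  if hs : s < k + 1 then p ⟨s, hs⟩ else u

theorem closePath_of_lt {k : ℕ} (p : Fin (k+1) → V) (u : V) {s : ℕ} (hs : s < k + 1) :
    closePath p u s = p ⟨s, hs⟩ :=
  dif_pos hs

theorem closePath_last {k : ℕ} (p : Fin (k+1) → V) (u : V) : closePath p u (k + 1) = u :=
  dif_neg (lt_irrefl _)

theorem isHoleEmb_closePath {k : ℕ} {p : Fin (k+1) → V} (hp : IsPathEmb G k p) (hk : 2 ≤ k)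
    {u : V} (hu : ∀ i, p i ≠ u) (hadj : ∀ i, G.Adj u (p i) ↔ (i : ℕ) = 0 ∨ (i : ℕ) = k) :
    IsHoleEmb G (k+2) (fun i => closePath p u i.val) := by
  have cases_lt : ∀ s < k + 2, s < k + 1 ∨ s = k + 1 := by omega
  refine isHoleEmb_of_nat (by omega) (fun s hs t ht hst => ?_) (fun s hs t ht => ?_)
  · rcases cases_lt s hs with hs | rfl <;> rcases cases_lt t ht with ht | rfl <;>
      simp only [closePath_of_lt _ _ hs, closePath_of_lt _ _ ht, closePath_last] at hst
    · simpa using hp.1 hst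
    · exact absurd hst (hu _)
    · exact absurd hst.symm (hu _)
    · rfl
  · rcases cases_lt s hs with hs | rfl <;> rcases cases_lt t ht with ht | rfl <;>
      simp only [closePath_of_lt _ _ hs, closePath_of_lt _ _ ht, closePath_last]
    · rw [hp.2, Fin.val_mk, Fin.val_mk]; omega
    · rw [G.adj_comm, hadj, Fin.val_mk]; omega
    · rw [hadj, Fin.val_mk]; omega
    · simp only [G.irrefl, false_iff]; omega

theorem exists_first_adj {n : ℕ} (f : Fin (n+1) → V) {z : V}
    (hz1 : ∀ t : Fin (n+1), (t : ℕ) = 1 → ¬ G.Adj z (f t)) {i : Fin (n+1)} (hi : i ≠ 0)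
    (hzi : G.Adj z (f i)) :
    ∃ k : Fin (n+1), 2 ≤ (k : ℕ) ∧ G.Adj z (f k) ∧ ∀ t, 0 < t → t < k → ¬ G.Adj z (f t) := by
  obtain ⟨k, ⟨hk0, hzk⟩, hmin⟩ :=
    wellFounded_lt.has_min {t | 0 < t ∧ G.Adj z (f t)} ⟨i, Fin.pos_iff_ne_zero.2 hi, hzi⟩
  have hk1 : (k : ℕ) ≠ 1 := fun h => hz1 k h hzk
  have hk0' : (k : ℕ) ≠ 0 := Fin.val_ne_of_ne hk0.ne'
  exact ⟨k, by omega, hzk, fun t ht htk hzt => hmin t ⟨ht, hzt⟩ htk⟩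

theorem ClockFree.not_adj_of_le_first_adj (hG : ClockFree G) {n : ℕ} {f : Fin (n+1) → V}
    (hf : IsPathEmb G n f) {u w : V} (hu : ∀ i, f i ≠ u) (hw : ∀ i, f i ≠ w) (huw : u ≠ w)
    {k m : Fin (n+1)} (hm : 2 ≤ (m : ℕ)) (hmk : m ≤ k) (hu0 : G.Adj u (f 0))
    (huk : G.Adj u (f k)) (hu_first : ∀ t, 0 < t → t < k → ¬ G.Adj u (f t))
    (hw0 : G.Adj w (f 0)) : ¬ G.Adj w (f m) := by
  intro hwm
  have hkn : (k : ℕ) ≤ n := Nat.lt_succ_iff.1 k.isLt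
  have hmk' : (m : ℕ) ≤ k := hmk
  set p := f ∘ Fin.castLE (Nat.succ_le_succ hkn)
  have hp_val : ∀ s (hs : s < (k : ℕ) + 1), closePath p u s = f ⟨s, by omega⟩ :=
    fun s hs => closePath_of_lt p u hs
  have hu_ends : ∀ i, G.Adj u (p i) ↔ (i : ℕ) = 0 ∨ (i : ℕ) = k := by
    intro i
    refine ⟨fun h => ?_, fun h => ?_⟩
    · by_contra! hi
      exact hu_first _ (Fin.pos_iff_ne_zero.2 (Fin.ne_of_val_ne hi.1))
        (Fin.lt_def.2 (by rw [Fin.val_castLE]; omega)) h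
    · rcases h with h | h
      · rw [show p i = f 0 from congrArg f (Fin.ext h)]; exact hu0
      · rw [show p i = f k from congrArg f (Fin.ext h)]; exact huk
  have hC := isHoleEmb_closePath (hf.castLE hkn) (by omega) (fun i => hu _) hu_ends
  have hw_off : ∀ s < (k : ℕ) + 2, w ≠ closePath p u s := by
    intro s hs
    rcases Nat.lt_succ_iff_lt_or_eq.1 hs with hs | rfl
    · rw [hp_val s hs]; exact (hw _).symm
    · rw [closePath_last]; exact huw.symm
  have key := hG.eq_or_adj_of_isHoleEmb hC hw_off (s := 0) (t := m) (by omega) (by omega)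
    (by rw [hp_val 0 (by omega)]; exact hw0) (by rw [hp_val m (by omega)]; exact hwm)
  rw [hp_val 0 (by omega), hp_val m (by omega), hf.2] at key
  rcases key with h | h
  · have := Fin.mk.inj (hf.1 h); omega
  · simp only at h; omega

end SimpleGraph

theorem clockFree_claw_lemma_general (G : SimpleGraph V) (hG : ClockFree G)
    (n : ℕ) (f : Fin (n+1) → V) (hf : IsPathEmb G n f)
    (a y x v : V) (ha : f 0 = a) (hy : f 1 = y)
    (hax : G.Adj a x) (hav : G.Adj a v)
    (hxP : ∀ i, f i ≠ x) (hvP : ∀ i, f i ≠ v)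
    (hxvne : x ≠ v)
    (hxy : ¬ G.Adj x y) (hvy : ¬ G.Adj v y) :
    (∀ i, f i ≠ a → ¬ G.Adj x (f i)) ∨ (∀ i, f i ≠ a → ¬ G.Adj v (f i)) := by
  by_contra! ⟨⟨i, hia, hxi⟩, ⟨j, hja, hvj⟩⟩
  subst ha hy
  have hnot_adj_one : ∀ z, ¬ G.Adj z (f 1) → ∀ t : Fin (n+1), (t : ℕ) = 1 → ¬ G.Adj z (f t) := by
    intro z hz t ht
    rwa [show t = 1 from Fin.ext (by rw [ht, Fin.val_one', Nat.mod_eq_of_lt (by omega)])]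
  obtain ⟨kx, hkx, hxk, hx_first⟩ :=
    exists_first_adj f (hnot_adj_one x hxy) (fun h => hia (congrArg f h)) hxi
  obtain ⟨kv, hkv, hvk, hv_first⟩ :=
    exists_first_adj f (hnot_adj_one v hvy) (fun h => hja (congrArg f h)) hvj
  rcases le_total kx kv with hle | hle
  · exact hG.not_adj_of_le_first_adj hf hvP hxP hxvne.symm hkx hle hav.symm hvk hv_first
      hax.symm hxk
  · exact hG.not_adj_of_le_first_adj hf hxP hvP hxvne hkv hle hax.symm hxk hx_first
      hav.symm hvk

/-- Lemma 4.4: let `P` be an induced path with end `a` whose neighbour in `P` is `y`,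
and let `x, v` be neighbours of `a` outside `P` with `{x,y,v}` stable. Then at least
one of `x` and `v` has no neighbour in `P \ {a}`. -/
theorem clockFree_claw_lemma (G : SimpleGraph V) (hG : ClockFree G)
    (n : ℕ) (hn : 1 ≤ n) (f : Fin (n+1) → V) (hf : IsPathEmb G n f)
    (a y x v : V) (ha : f 0 = a) (hy : f 1 = y)
    (hax : G.Adj a x) (hav : G.Adj a v)
    (hxP : ∀ i, f i ≠ x) (hvP : ∀ i, f i ≠ v)
    (hxyne : x ≠ y) (hxvne : x ≠ v) (hvyne : v ≠ y)
    (hxy : ¬ G.Adj x y) (hxv : ¬ G.Adj x v) (hvy : ¬ G.Adj v y) :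
    (∀ i, f i ≠ a → ¬ G.Adj x (f i)) ∨ (∀ i, f i ≠ a → ¬ G.Adj v (f i)) :=
  clockFree_claw_lemma_general G hG n f hf a y x v ha hy hax hav hxP hvP hxvne hxy hvy
end

section
/- Let G be a clock-free graph and let (A, C, B) be a separation of G with A and B non-empty. Suppose there exist vertices v1, ..., vk in C such that C is contained in the union of the closed neighbourhoods N[v1], ..., N[vk]. Let D1 be a connected component of G[A] and D2 a connected component of G[B]. Then there exist cliques X1, ..., Xk contained in C such that every path from a vertex of D1 to a vertex of D2 contains a vertex of X1 ∪ ... ∪ Xk. -/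
open SimpleGraph

variable {V : Type*}

/-!
Fix `d₀ ∈ D₂` and let `C₁` be the set of vertices of `C` with a neighbour in `D₁`. For each `i`
let `Kᵢ` be the set of vertices joined to `d₀` by a walk avoiding `C₁ ∪ {vᵢ}`, and let `Xᵢ` be `vᵢ`
together with those neighbours of `vᵢ` in `C₁` that have a neighbour in `Kᵢ`. Two non-adjacent
vertices of `Xᵢ \ {vᵢ}` are joined by an induced path through `D₁` and by one through `Kᵢ`; as
these two sets are disjoint and anticomplete, the paths close up to a hole in which `vᵢ` has two
non-adjacent neighbours, which is a clock. Conversely, a walk from `D₁` to `D₂` that avoids every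
`vᵢ` must enter the set of vertices joined to `d₀` avoiding `C₁ ∪ {v₁, …, v_k}` from some `c ∈ C₁`;
that set lies in every `Kᵢ`, so `c ∈ Xᵢ` for any `i` with `c ∈ N[vᵢ]`.
-/

section

variable {G : SimpleGraph V}

-- `IsPathEmb` with indices in `ℕ`, which keeps the index arithmetic within reach of `omega`.
def IsInducedPathSeq (G : SimpleGraph V) (n : ℕ) (u : ℕ → V) : Prop :=
  (∀ s ≤ n, ∀ t ≤ n, u s = u t → s = t) ∧
    ∀ s ≤ n, ∀ t ≤ n, (G.Adj (u s) (u t) ↔ t = s + 1 ∨ s = t + 1)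

namespace SimpleGraph.Walk

theorem mem_support_of_mem_support_drop {x y z : V} {p : G.Walk x y} {n : ℕ}
    (hz : z ∈ (p.drop n).support) : z ∈ p.support := by
  obtain ⟨m, rfl, -⟩ := mem_support_iff_exists_getVert.mp hz
  rw [drop_getVert]
  exact p.getVert_mem_support _

theorem isInducedPathSeq_getVert_of_minimal {P : Set V} {x y : V} (q : G.Walk x y)
    (hq : ∀ z ∈ q.support, z ∈ P)
    (hmin : ∀ r : G.Walk x y, (∀ z ∈ r.support, z ∈ P) → q.length ≤ r.length) :
    IsInducedPathSeq G q.length q.getVert := by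
  have shortcut : ∀ s t, s ≤ t → t ≤ q.length → ∀ r : G.Walk (q.getVert s) (q.getVert t),
      (∀ z ∈ r.support, z ∈ q.support) → q.length ≤ s + r.length + (q.length - t) := by
    intro s t hst ht r hr
    have := hmin ((q.take s).append (r.append (q.drop t))) fun z hz => hq z <| by
      simp only [mem_support_append_iff, support_take] at hz
      rcases hz with hz | hz | hz
      exacts [List.mem_of_mem_take hz, hr z hz, mem_support_of_mem_support_drop hz]
    simp only [length_append, take_length, drop_length] at this
    omega
  refine ⟨fun s hs t ht h => ?_, fun s hs t ht => ?_⟩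
  · wlog hst : s ≤ t generalizing s t
    · exact (this t ht s hs h.symm (by omega)).symm
    have := shortcut s t hst ht (nil.copy rfl h) (by simp)
    simp only [length_copy, length_nil] at this
    omega
  · wlog hst : s ≤ t generalizing s t
    · rw [G.adj_comm, this t ht s hs (by omega)]
      omega
    refine ⟨fun h => ?_, ?_⟩
    · have := shortcut s t hst ht (.cons h .nil) (by simp)
      simp only [length_cons, length_nil] at this
      have : s ≠ t := by rintro rfl; exact G.irrefl h
      omega
    · rintro (rfl | rfl)
      · exact q.adj_getVert_succ (by omega)
      · omega

theorem exists_isInducedPathSeq {S : Set V} {x y : V} (p : G.Walk x y)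
    (hp : ∀ z ∈ p.support, z = x ∨ z = y ∨ z ∈ S) (hxy : x ≠ y) (hnadj : ¬ G.Adj x y) :
    ∃ a u, 2 ≤ a ∧ IsInducedPathSeq G a u ∧ u 0 = x ∧ u a = y ∧
      ∀ t, 0 < t → t < a → u t ∈ S := by
  classical
  have hex : ∃ n, ∃ q : G.Walk x y, (∀ z ∈ q.support, z = x ∨ z = y ∨ z ∈ S) ∧ q.length = n :=
    ⟨_, p, hp, rfl⟩
  obtain ⟨q, hq, hqlen⟩ := Nat.find_spec hex
  have hind : IsInducedPathSeq G q.length q.getVert :=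
    q.isInducedPathSeq_getVert_of_minimal (P := {z | z = x ∨ z = y ∨ z ∈ S}) hq
      fun r hr => hqlen ▸ Nat.find_min' hex ⟨r, hr, rfl⟩
  have hlen : 2 ≤ q.length := by
    by_contra! h
    have hend := q.getVert_length
    interval_cases hl : q.length
    · exact hxy (by simpa using hend)
    · exact hnadj (by simpa [hend] using q.adj_getVert_succ (i := 0) (by omega))
  refine ⟨q.length, q.getVert, hlen, hind, q.getVert_zero, q.getVert_length,
    fun t ht0 ht => ?_⟩
  rcases hq _ (q.getVert_mem_support t) with h | h | h
  · exact absurd (hind.1 t ht.le 0 (Nat.zero_le _) (h.trans q.getVert_zero.symm)) (by omega)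
  · exact absurd (hind.1 t ht.le _ le_rfl (h.trans q.getVert_length.symm)) (by omega)
  · exact h

end SimpleGraph.Walk

theorem isHoleEmb_of_cyclic {n : ℕ} (hn : 4 ≤ n) {g : ℕ → V}
    (hinj : ∀ s < n, ∀ t < n, g s = g t → s = t)
    (hadj : ∀ s < n, ∀ t < n, (G.Adj (g s) (g t) ↔
      t = s + 1 ∨ s = t + 1 ∨ (s = 0 ∧ t = n - 1) ∨ (t = 0 ∧ s = n - 1))) :
    IsHoleEmb G n (fun i => g i.val) := by
  have : NeZero n := ⟨by omega⟩
  have : Fact (1 < n) := ⟨by omega⟩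
  have hsucc : ∀ i j : ZMod n, i = j + 1 ↔ i.val = j.val + 1 ∨ (j.val = n - 1 ∧ i.val = 0) := by
    intro i j
    rw [← (ZMod.val_injective n).eq_iff, ZMod.val_add, ZMod.val_one]
    have := i.val_lt
    rcases eq_or_ne j.val (n - 1) with h | h
    · rw [h, Nat.sub_add_cancel (by omega), Nat.mod_self]
      omega
    · rw [Nat.mod_eq_of_lt (by have := j.val_lt; omega)]
      omega
  refine ⟨hn, fun i j h => ZMod.val_injective n (hinj _ i.val_lt _ j.val_lt h), fun i j => ?_⟩
  rw [hadj _ i.val_lt _ j.val_lt, hsucc, hsucc]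
  have := i.val_lt
  have := j.val_lt
  omega

theorem isHoleEmb_glue {a b : ℕ} {u w : ℕ → V} (hu : IsInducedPathSeq G a u)
    (hw : IsInducedPathSeq G b w) (ha : 2 ≤ a) (hb : 2 ≤ b) (hstart : w 0 = u 0) (hend : w b = u a)
    (hne : ∀ s t, 0 < s → s < a → 0 < t → t < b → u s ≠ w t)
    (hnadj : ∀ s t, 0 < s → s < a → 0 < t → t < b → ¬ G.Adj (u s) (w t)) :
    IsHoleEmb G (a + b) (fun i => if i.val ≤ a then u i.val else w (a + b - i.val)) := by
  have cross : ∀ s ≤ a, ∀ t, 0 < t → t < b →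
      u s ≠ w t ∧ (G.Adj (u s) (w t) ↔ (s = 0 ∧ t = 1) ∨ (s = a ∧ t = b - 1)) := by
    intro s hs t ht0 htb
    rcases Nat.eq_zero_or_pos s with rfl | hs0
    · rw [← hstart, hw.2 0 (by omega) t htb.le]
      exact ⟨fun h => absurd (hw.1 0 (by omega) t htb.le h) (by omega), by omega⟩
    rcases eq_or_lt_of_le hs with rfl | hsa
    · rw [← hend, hw.2 b le_rfl t htb.le]
      exact ⟨fun h => absurd (hw.1 b le_rfl t htb.le h) (by omega), by omega⟩
    · exact ⟨hne s t hs0 hsa ht0 htb, iff_of_false (hnadj s t hs0 hsa ht0 htb) (by omega)⟩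
  refine isHoleEmb_of_cyclic (G := G) (n := a + b) (g := fun t => if t ≤ a then u t else
    w (a + b - t)) (by omega) (fun s hs t ht h => ?_) (fun s hs t ht => ?_)
  · wlog hst : s ≤ t generalizing s t
    · exact (this t ht s hs h.symm (by omega)).symm
    by_cases hta : t ≤ a
    · simp only [hta, hst.trans hta, if_true] at h
      exact hu.1 s (hst.trans hta) t hta h
    by_cases hsa : s ≤ a
    · simp only [hta, hsa, if_true, if_false] at h
      exact absurd h (cross s hsa _ (by omega) (by omega)).1
    · simp only [hta, hsa, if_false] at h
      have := hw.1 _ (by omega) _ (by omega) h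
      omega
  · wlog hst : s ≤ t generalizing s t
    · rw [G.adj_comm, this t ht s hs (by omega)]
      omega
    by_cases hta : t ≤ a
    · simp only [hta, hst.trans hta, if_true]
      rw [hu.2 s (hst.trans hta) t hta]
      omega
    by_cases hsa : s ≤ a
    · simp only [hta, hsa, if_true, if_false]
      rw [(cross s hsa _ (by omega) (by omega)).2]
      omega
    · simp only [hta, hsa, if_false]
      rw [hw.2 _ (by omega) _ (by omega)]
      omega

theorem ClockFree.adj_of_walks (hG : ClockFree G) {D M : Set V} {v x y : V}
    (hDM : Disjoint D M) (hanti : ∀ d ∈ D, ∀ m ∈ M, ¬ G.Adj d m) (hvD : v ∉ D) (hvM : v ∉ M)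
    (hvx : G.Adj v x) (hvy : G.Adj v y) (hxy : x ≠ y)
    (p : G.Walk x y) (hp : ∀ z ∈ p.support, z = x ∨ z = y ∨ z ∈ D)
    (q : G.Walk x y) (hq : ∀ z ∈ q.support, z = x ∨ z = y ∨ z ∈ M) : G.Adj x y := by
  by_contra hnadj
  obtain ⟨a, u, ha, hu, hu0, hua, huD⟩ := p.exists_isInducedPathSeq hp hxy hnadj
  obtain ⟨b, w, hb, hw, hw0, hwb, hwM⟩ := q.exists_isInducedPathSeq hq hxy hnadj
  have hhole := isHoleEmb_glue hu hw ha hb (hw0.trans hu0.symm) (hwb.trans hua.symm)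
    (fun s t hs0 hsa ht0 htb h => Set.disjoint_left.mp hDM (huD s hs0 hsa) (h ▸ hwM t ht0 htb))
    (fun s t hs0 hsa ht0 htb => hanti _ (huD s hs0 hsa) _ (hwM t ht0 htb))
  have hvu : ∀ s ≤ a, v ≠ u s := by
    intro s hs h
    rcases Nat.eq_zero_or_pos s with rfl | hs0
    · exact G.ne_of_adj hvx (h.trans hu0)
    rcases eq_or_lt_of_le hs with rfl | hsa
    · exact G.ne_of_adj hvy (h.trans hua)
    · exact hvD (h ▸ huD s hs0 hsa)
  have hx : ((0 : ZMod (a + b))).val = 0 := ZMod.val_zero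
  have hy : ((a : ZMod (a + b))).val = a := ZMod.val_cast_of_lt (by omega)
  have : NeZero (a + b) := ⟨by omega⟩
  refine hG ⟨a + b, _, v, hhole, fun i => ?_, 0, a, ?_⟩
  · split_ifs with h
    · exact hvu _ h
    · have := i.val_lt
      exact fun h' => hvM (h' ▸ hwM _ (by omega) (by omega))
  · simp only [hx, hy, le_refl, zero_le, if_true, hu0, hua]
    exact ⟨hvx, hvy, hxy, hnadj⟩

theorem exists_walk_of_induce_preconnected {S : Set V} (hS : (G.induce S).Preconnected)
    {a b : V} (ha : a ∈ S) (hb : b ∈ S) : ∃ p : G.Walk a b, ∀ z ∈ p.support, z ∈ S := by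
  obtain ⟨q⟩ := hS ⟨a, ha⟩ ⟨b, hb⟩
  let p : G.Walk a b := q.map (Embedding.induce S).toHom
  refine ⟨p, fun z hz => ?_⟩
  rw [show p.support = q.support.map _ from Walk.support_map _ _] at hz
  obtain ⟨z', -, rfl⟩ := List.mem_map.mp hz
  exact z'.2

theorem exists_walk_via {S : Set V} (hS : (G.induce S).Preconnected) {x y m m' : V}
    (hm : m ∈ S) (hm' : m' ∈ S) (hx : G.Adj x m) (hy : G.Adj y m') :
    ∃ p : G.Walk x y, ∀ z ∈ p.support, z = x ∨ z = y ∨ z ∈ S := by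
  obtain ⟨r, hr⟩ := exists_walk_of_induce_preconnected hS hm hm'
  refine ⟨.cons hx (r.concat hy.symm), fun z hz => ?_⟩
  simp only [Walk.support_cons, Walk.support_concat, List.mem_cons, List.mem_append,
    List.not_mem_nil, or_false] at hz
  rcases hz with rfl | hz | rfl
  exacts [Or.inl rfl, Or.inr (Or.inr (hr z hz)), Or.inr (Or.inl rfl)]

theorem ClockFree.isClique_insert_attachments (hG : ClockFree G) {D M : Set V} {v : V}
    (hDM : Disjoint D M) (hanti : ∀ d ∈ D, ∀ m ∈ M, ¬ G.Adj d m)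
    (hD : (G.induce D).Preconnected) (hM : (G.induce M).Preconnected) (hvD : v ∉ D) (hvM : v ∉ M) :
    G.IsClique (insert v {c | G.Adj v c ∧ (∃ d ∈ D, G.Adj c d) ∧ ∃ m ∈ M, G.Adj c m}) := by
  refine SimpleGraph.isClique_insert.mpr ⟨?_, fun c hc _ => hc.1⟩
  rintro x ⟨hvx, ⟨d, hd, hxd⟩, m, hm, hxm⟩ y ⟨hvy, ⟨d', hd', hyd'⟩, m', hm', hym'⟩ hxy
  obtain ⟨p, hp⟩ := exists_walk_via hD hd hd' hxd hyd'
  obtain ⟨q, hq⟩ := exists_walk_via hM hm hm' hxm hym'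
  exact hG.adj_of_walks hDM hanti hvD hvM hvx hvy hxy p hp q hq

def reachAvoiding (G : SimpleGraph V) (T : Set V) (r : V) : Set V :=
  {m | ∃ p : G.Walk m r, ∀ z ∈ p.support, z ∉ T}

section reachAvoiding

variable {T T' S : Set V} {r : V}

theorem not_mem_of_mem_reachAvoiding {m : V} (hm : m ∈ reachAvoiding G T r) : m ∉ T :=
  let ⟨p, hp⟩ := hm
  hp m p.start_mem_support

theorem reachAvoiding_anti (h : T ⊆ T') : reachAvoiding G T' r ⊆ reachAvoiding G T r :=
  fun _ ⟨p, hp⟩ => ⟨p, fun z hz hzT => hp z hz (h hzT)⟩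

theorem mem_reachAvoiding_of_adj {m z : V} (hm : m ∈ reachAvoiding G T r) (hzm : G.Adj z m)
    (hz : z ∉ T) : z ∈ reachAvoiding G T r := by
  obtain ⟨p, hp⟩ := hm
  refine ⟨.cons hzm p, fun z' hz' => ?_⟩
  rcases List.mem_cons.mp hz' with rfl | hz'
  exacts [hz, hp z' hz']

theorem exists_walk_subset_reachAvoiding {m : V} (hm : m ∈ reachAvoiding G T r) :
    ∃ p : G.Walk m r, ∀ z ∈ p.support, z ∈ reachAvoiding G T r := by
  classical
  obtain ⟨p, hp⟩ := hm
  exact ⟨p, fun z hz => ⟨p.dropUntil z hz,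
    fun z' hz' => hp z' (p.support_dropUntil_subset_support hz hz')⟩⟩

theorem reachAvoiding_induce_preconnected : (G.induce (reachAvoiding G T r)).Preconnected := by
  rintro ⟨a, ha⟩ ⟨b, hb⟩
  obtain ⟨p, hp⟩ := exists_walk_subset_reachAvoiding ha
  obtain ⟨q, hq⟩ := exists_walk_subset_reachAvoiding hb
  refine ⟨(p.append q.reverse).induce _ fun z hz => ?_⟩
  rw [Walk.mem_support_append_iff, Walk.support_reverse, List.mem_reverse] at hz
  exact hz.elim (hp z) (hq z)

theorem subset_reachAvoiding (hS : (G.induce S).Preconnected) (hr : r ∈ S) (hST : Disjoint S T) :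
    S ⊆ reachAvoiding G T r := fun _ hs =>
  let ⟨p, hp⟩ := exists_walk_of_induce_preconnected hS hs hr
  ⟨p, fun z hz => Set.disjoint_left.mp hST (hp z hz)⟩

theorem disjoint_reachAvoiding (hS : ∀ s ∈ S, ∀ z, G.Adj s z → z ∉ S → z ∈ T) (hr : r ∉ S) :
    Disjoint S (reachAvoiding G T r) := by
  refine Set.disjoint_left.mpr fun s hs ⟨p, hp⟩ => ?_
  obtain ⟨d, hd, hd₁, hd₂⟩ := p.exists_boundary_dart S hs hr
  exact hp _ (p.dart_snd_mem_support_of_mem_darts hd) (hS _ hd₁ _ d.adj hd₂)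

theorem not_adj_of_mem_reachAvoiding (hS : ∀ s ∈ S, ∀ z, G.Adj s z → z ∉ S → z ∈ T)
    (hr : r ∉ S) {s m : V} (hs : s ∈ S) (hm : m ∈ reachAvoiding G T r) : ¬ G.Adj s m :=
  fun hsm => not_mem_of_mem_reachAvoiding hm
    (hS s hs m hsm (Set.disjoint_right.mp (disjoint_reachAvoiding hS hr) hm))

theorem ClockFree.isClique_insert_attachments_reachAvoiding (hG : ClockFree G) {v : V}
    (hS : (G.induce S).Preconnected) (hST : ∀ s ∈ S, ∀ z, G.Adj s z → z ∉ S → z ∈ T)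
    (hr : r ∉ S) (hvS : v ∉ S) :
    G.IsClique (insert v {c | G.Adj v c ∧ (∃ s ∈ S, G.Adj c s) ∧
      ∃ m ∈ reachAvoiding G (insert v T) r, G.Adj c m}) := by
  have hST' : ∀ s ∈ S, ∀ z, G.Adj s z → z ∉ S → z ∈ insert v T :=
    fun s hs z hsz hz => Or.inr (hST s hs z hsz hz)
  exact hG.isClique_insert_attachments (disjoint_reachAvoiding hST' hr)
    (fun _ hs _ hm => not_adj_of_mem_reachAvoiding hST' hr hs hm) hS
    reachAvoiding_induce_preconnected hvS (not_mem_of_mem_reachAvoiding · (Set.mem_insert _ _))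

theorem exists_center_or_boundary_mem_support {ι : Type*} {v : ι → V} {d₁ d₂ : V}
    (hcov : ∀ c ∈ T, ∃ i, c = v i ∨ G.Adj (v i) c)
    (hd₁ : d₁ ∉ reachAvoiding G (T ∪ Set.range v) r)
    (hd₂ : d₂ ∈ reachAvoiding G (T ∪ Set.range v) r) (p : G.Walk d₁ d₂) :
    ∃ i, v i ∈ p.support ∨ ∃ c ∈ p.support, c ∈ T ∧ G.Adj (v i) c ∧
      ∃ m ∈ reachAvoiding G (insert (v i) T) r, G.Adj c m := by
  by_cases hv : ∃ i, v i ∈ p.support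
  · exact hv.imp fun _ => Or.inl
  push Not at hv
  obtain ⟨⟨⟨m, c⟩, hmc⟩, hd, hm, hc⟩ := p.reverse.exists_boundary_dart _ hd₂ hd₁
  have hcp : c ∈ p.support := by
    simpa using p.reverse.dart_snd_mem_support_of_mem_darts hd
  have hcT : c ∈ T := by
    by_contra hcT
    refine hc (mem_reachAvoiding_of_adj hm hmc.symm ?_)
    rintro (h | ⟨i, rfl⟩)
    exacts [hcT h, hv i hcp]
  obtain ⟨i, rfl | hic⟩ := hcov c hcT
  · exact absurd hcp (hv i)
  have hsub : insert (v i) T ⊆ T ∪ Set.range v :=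
    Set.insert_subset (Or.inr (Set.mem_range_self i)) Set.subset_union_left
  exact ⟨i, Or.inr ⟨c, hcp, hcT, hic, m, reachAvoiding_anti hsub hm, hmc.symm⟩⟩

end reachAvoiding

theorem IsComponentOf.mem_of_adj {A C B D : Set V} (hD : IsComponentOf G A D)
    (hunion : A ∪ C ∪ B = Set.univ) (hanti : ∀ a ∈ A, ∀ b ∈ B, ¬ G.Adj a b) {d z : V}
    (hd : d ∈ D) (hdz : G.Adj d z) (hz : z ∉ D) : z ∈ C := by
  have hz' : z ∈ A ∪ C ∪ B := hunion ▸ Set.mem_univ z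
  rcases hz' with (hzA | hzC) | hzB
  · exact absurd hdz (hD.2.2.2 d hd z hzA hz)
  · exact hzC
  · exact absurd hdz (hanti d (hD.2.1 hd) z hzB)

end

theorem star_to_clique_general (G : SimpleGraph V) (hG : ClockFree G)
    (A C B : Set V)
    (hAC : Disjoint A C) (hAB : Disjoint A B) (hCB : Disjoint C B)
    (hunion : A ∪ C ∪ B = Set.univ)
    (hanti : ∀ a ∈ A, ∀ b ∈ B, ¬ G.Adj a b)
    (k : ℕ) (v : Fin k → V) (hv : ∀ i, v i ∈ C)
    (hcov : ∀ c ∈ C, ∃ i, c = v i ∨ G.Adj (v i) c)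
    (D₁ D₂ : Set V) (hD₁ : IsComponentOf G A D₁) (hD₂ : IsComponentOf G B D₂) :
    ∃ X : Fin k → Set V, (∀ i, X i ⊆ C ∧ G.IsClique (X i)) ∧
      ∀ d₁ ∈ D₁, ∀ d₂ ∈ D₂, ∀ p : G.Walk d₁ d₂, p.IsPath →
        ∃ i, ∃ x ∈ X i, x ∈ p.support := by
  obtain ⟨d₀, hd₀⟩ := hD₂.1
  set C₁ := {c ∈ C | ∃ d ∈ D₁, G.Adj c d}
  have hd₀D₁ : d₀ ∉ D₁ := fun h => Set.disjoint_left.mp hAB (hD₁.2.1 h) (hD₂.2.1 hd₀)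
  have hD₁out : ∀ d ∈ D₁, ∀ z, G.Adj d z → z ∉ D₁ → z ∈ C₁ :=
    fun d hd z hdz hz => ⟨hD₁.mem_of_adj hunion hanti hd hdz hz, d, hd, hdz.symm⟩
  refine ⟨fun i => insert (v i) ({c | G.Adj (v i) c ∧ (∃ d ∈ D₁, G.Adj c d) ∧
      ∃ m ∈ reachAvoiding G (insert (v i) C₁) d₀, G.Adj c m} ∩ C),
    fun i => ⟨Set.insert_subset (hv i) Set.inter_subset_right, ?_⟩, ?_⟩
  · refine (hG.isClique_insert_attachments_reachAvoiding hD₁.2.2.1.preconnected hD₁out hd₀D₁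
      fun h => Set.disjoint_left.mp hAC (hD₁.2.1 h) (hv i)).subset ?_
    exact Set.insert_subset_insert Set.inter_subset_left
  intro d₁ hd₁ d₂ hd₂ p _
  have hd₁W : d₁ ∉ reachAvoiding G (C₁ ∪ Set.range v) d₀ := Set.disjoint_left.mp
    (disjoint_reachAvoiding (fun d hd z hdz hz => Or.inl (hD₁out d hd z hdz hz)) hd₀D₁) hd₁
  have hd₂W : d₂ ∈ reachAvoiding G (C₁ ∪ Set.range v) d₀ :=
    subset_reachAvoiding hD₂.2.2.1.preconnected hd₀ (Set.disjoint_of_subset hD₂.2.1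
      (Set.union_subset (fun c hc => hc.1) (Set.range_subset_iff.mpr hv)) hCB.symm) hd₂
  obtain ⟨i, hi | ⟨c, hcp, ⟨hcC, hcD₁⟩, hvc, hcK⟩⟩ :=
    exists_center_or_boundary_mem_support (fun c hc => hcov c hc.1) hd₁W hd₂W p
  · exact ⟨i, v i, Set.mem_insert _ _, hi⟩
  · exact ⟨i, c, Or.inr ⟨⟨hvc, hcD₁, hcK⟩, hcC⟩, hcp⟩

/-- Lemma `startoclique`: in a clock-free graph with a separation `(A,C,B)` where `C`
is covered by `k` closed neighbourhoods of vertices of `C`, any two components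
`D₁ ⊆ A`, `D₂ ⊆ B` are separated by a union of `k` cliques inside `C`. -/
theorem star_to_clique (G : SimpleGraph V) (hG : ClockFree G)
    (A C B : Set V)
    (hAC : Disjoint A C) (hAB : Disjoint A B) (hCB : Disjoint C B)
    (hunion : A ∪ C ∪ B = Set.univ)
    (hanti : ∀ a ∈ A, ∀ b ∈ B, ¬ G.Adj a b)
    (hA : A.Nonempty) (hB : B.Nonempty)
    (k : ℕ) (v : Fin k → V) (hv : ∀ i, v i ∈ C)
    (hcov : ∀ c ∈ C, ∃ i, c = v i ∨ G.Adj (v i) c)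
    (D₁ D₂ : Set V) (hD₁ : IsComponentOf G A D₁) (hD₂ : IsComponentOf G B D₂) :
    ∃ X : Fin k → Set V, (∀ i, X i ⊆ C ∧ G.IsClique (X i)) ∧
      ∀ d₁ ∈ D₁, ∀ d₂ ∈ D₂, ∀ p : G.Walk d₁ d₂, p.IsPath →
        ∃ i, ∃ x ∈ X i, x ∈ p.support :=
  star_to_clique_general G hG A C B hAC hAB hCB hunion hanti k v hv hcov D₁ D₂ hD₁ hD₂
end

section
/- If a clock-free graph G admits a star cutset, then G admits a clique cutset. -/
open SimpleGraph

variable {V : Type*}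

/-! Let `X` be a star cutset centred at `x`, and `a`, `b` in different components of `G \ X`.
Shrink `X` twice: `A` is the component of `a`, `B` the component of `b` in `G \ ({x} ∪ N(A))`,
and `Y = {x} ∪ N(B)`. Then `Y ⊆ X` is still a cutset and every vertex of `Y \ {x}` has
neighbours in both `A` and `B`. If `u, v ∈ Y` were non-adjacent, shortest `u`–`v` paths through
`A` and through `B` would form a hole in which the centre `x` sees the non-adjacent `u` and `v`:
a clock. -/

namespace SimpleGraph

variable {G : SimpleGraph V}

def reachWithin (G : SimpleGraph V) (S : Set V) (a : V) : Set V :=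
  {t | ∃ p : G.Walk a t, ∀ z ∈ p.support, z ∈ S}

def outerBoundary (G : SimpleGraph V) (R : Set V) : Set V :=
  {y | y ∉ R ∧ ∃ r ∈ R, G.Adj r y}

section reachWithin

variable {S : Set V} {a : V}

theorem reachable_induce_iff {b : V} (ha : a ∈ S) (hb : b ∈ S) :
    (G.induce S).Reachable ⟨a, ha⟩ ⟨b, hb⟩ ↔ b ∈ G.reachWithin S a := by
  constructor
  · rintro ⟨w⟩
    refine ⟨w.map (Embedding.induce S).toHom, fun z hz => ?_⟩
    erw [Walk.support_map, List.mem_map] at hz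
    obtain ⟨z, -, rfl⟩ := hz
    exact z.2
  · rintro ⟨p, hp⟩
    exact ⟨p.induce S hp⟩

theorem reachWithin_subset : G.reachWithin S a ⊆ S :=
  fun t ⟨p, hp⟩ => hp t p.end_mem_support

theorem self_mem_reachWithin (ha : a ∈ S) : a ∈ G.reachWithin S a :=
  ⟨.nil, by simpa using ha⟩

theorem mem_reachWithin_of_mem_support {t z : V} {p : G.Walk a t}
    (hp : ∀ z ∈ p.support, z ∈ S) (hz : z ∈ p.support) : z ∈ G.reachWithin S a := by
  classical
  exact ⟨p.takeUntil z hz, fun w hw => hp w (p.support_takeUntil_subset_support hz hw)⟩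

theorem outerBoundary_reachWithin_subset :
    G.outerBoundary (G.reachWithin S a) ⊆ Sᶜ := by
  rintro y ⟨hyR, r, ⟨p, hp⟩, hry⟩ hyS
  refine hyR ⟨p.concat hry, fun z hz => ?_⟩
  rw [Walk.support_concat, List.mem_append, List.mem_singleton] at hz
  rcases hz with hz | rfl
  exacts [hp z hz, hyS]

theorem induce_reachWithin_preconnected :
    (G.induce (G.reachWithin S a)).Preconnected := by
  rintro ⟨t₁, h₁⟩ ⟨t₂, h₂⟩
  rw [reachable_induce_iff]
  obtain ⟨p₁, hp₁⟩ := h₁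
  obtain ⟨p₂, hp₂⟩ := h₂
  refine ⟨p₁.reverse.append p₂, fun z hz => ?_⟩
  rw [Walk.mem_support_append_iff, Walk.support_reverse, List.mem_reverse] at hz
  rcases hz with hz | hz
  exacts [mem_reachWithin_of_mem_support hp₁ hz, mem_reachWithin_of_mem_support hp₂ hz]

end reachWithin

theorem Walk.end_mem_of_forall_not_mem_outerBoundary {R : Set V} {s t : V} (p : G.Walk s t)
    (hs : s ∈ R) (hp : ∀ z ∈ p.support, z ∉ G.outerBoundary R) : t ∈ R := by
  induction p with
  | nil => exact hs
  | cons h p ih =>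
    refine ih ?_ fun z hz => hp z (List.mem_cons_of_mem _ hz)
    by_contra hv
    exact hp _ (List.mem_cons_of_mem _ p.start_mem_support) ⟨hv, _, hs, h⟩

theorem isCutset_of_outerBoundary_subset {R Y : Set V} {a b : V} (hb : b ∈ R) (ha : a ∉ R)
    (hbY : b ∉ Y) (haY : a ∉ Y) (hR : G.outerBoundary R ⊆ Y) : IsCutset G Y := by
  refine ⟨⟨a, haY⟩, fun hconn => ha ?_⟩
  obtain ⟨p, hp⟩ := (reachable_induce_iff hbY haY).1 (hconn.preconnected _ _)
  exact p.end_mem_of_forall_not_mem_outerBoundary hb fun z hz hzR => hp z hz (hR hzR)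

theorem IsCutset.exists_not_mem_reachWithin {X : Set V} (hX : IsCutset G X) :
    ∃ a b, a ∉ X ∧ b ∉ X ∧ b ∉ G.reachWithin Xᶜ a := by
  obtain ⟨hne, hdisc⟩ := hX
  have : ¬(G.induce Xᶜ).Preconnected := fun hpre =>
    hdisc ((connected_iff _).2 ⟨hpre, hne.to_subtype⟩)
  simp only [Preconnected, not_forall] at this
  obtain ⟨⟨a, ha⟩, ⟨b, hb⟩, hab⟩ := this
  exact ⟨a, b, ha, hb, fun h => hab ((reachable_induce_iff ha hb).2 h)⟩

structure IsFullSeparation (G : SimpleGraph V) (x : V) (Y A B : Set V) : Prop where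
  disjoint : Disjoint A B
  not_adj : ∀ a ∈ A, ∀ b ∈ B, ¬G.Adj a b
  left_subset : A ⊆ Yᶜ
  right_subset : B ⊆ Yᶜ
  left_preconnected : (G.induce A).Preconnected
  right_preconnected : (G.induce B).Preconnected
  full : Y \ {x} ⊆ G.outerBoundary A ∩ G.outerBoundary B

theorem IsCutset.exists_isFullSeparation {X : Set V} {x : V} (hX : IsCutset G X) (hx : x ∈ X) :
    ∃ Y ⊆ X, x ∈ Y ∧ IsCutset G Y ∧ ∃ A B, G.IsFullSeparation x Y A B := by
  obtain ⟨a, b, haX, hbX, hab⟩ := hX.exists_not_mem_reachWithin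
  set A := G.reachWithin Xᶜ a
  set Y₁ := insert x (G.outerBoundary A)
  set B := G.reachWithin Y₁ᶜ b
  set Y := insert x (G.outerBoundary B)
  have hY₁X : Y₁ ⊆ X := Set.insert_subset hx fun y hy =>
    compl_compl X ▸ outerBoundary_reachWithin_subset hy
  have hYY₁ : Y ⊆ Y₁ := Set.insert_subset (Set.mem_insert x _) fun y hy =>
    compl_compl Y₁ ▸ outerBoundary_reachWithin_subset hy
  have hbB : b ∈ B := self_mem_reachWithin fun hb => hbX (hY₁X hb)
  have hA : A ⊆ Yᶜ := fun t ht htY => reachWithin_subset ht (hY₁X (hYY₁ htY))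
  have hB : B ⊆ Yᶜ := by
    rintro t ht (rfl | htB)
    · exact reachWithin_subset ht (Set.mem_insert _ _)
    · exact htB.1 ht
  have hdisj : Disjoint A B := by
    refine Set.disjoint_left.2 fun t htA ⟨p, hp⟩ => hab ?_
    refine p.reverse.end_mem_of_forall_not_mem_outerBoundary htA fun z hz hzA => ?_
    rw [Walk.support_reverse, List.mem_reverse] at hz
    exact hp z hz (Set.mem_insert_of_mem _ hzA)
  have hnadj : ∀ t ∈ A, ∀ s ∈ B, ¬G.Adj t s := fun t ht s hs hts =>
    reachWithin_subset hs (Set.mem_insert_of_mem _ ⟨Set.disjoint_right.1 hdisj hs, t, ht, hts⟩)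
  refine ⟨Y, hYY₁.trans hY₁X, Set.mem_insert x _,
    isCutset_of_outerBoundary_subset hbB (Set.disjoint_left.1 hdisj (self_mem_reachWithin haX))
      (hB hbB) (hA (self_mem_reachWithin haX)) (Set.subset_insert x _), A, B,
    ⟨hdisj, hnadj, hA, hB, induce_reachWithin_preconnected, induce_reachWithin_preconnected, ?_⟩⟩
  rintro u ⟨huY, hux⟩
  have huB : u ∈ G.outerBoundary B := (Set.mem_insert_iff.1 huY).resolve_left hux
  exact ⟨(Set.mem_insert_iff.1 (hYY₁ huY)).resolve_left hux, huB⟩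

namespace Walk

def IsInducedPath {u v : V} (p : G.Walk u v) : Prop :=
  p.IsPath ∧ ∀ i j, i + 1 < j → j ≤ p.length → ¬G.Adj (p.getVert i) (p.getVert j)

theorem exists_isInducedPath_within {S : Set V} {u v : V} (p : G.Walk u v)
    (hp : ∀ z ∈ p.support, z ∈ S) :
    ∃ q : G.Walk u v, (∀ z ∈ q.support, z ∈ S) ∧ q.IsInducedPath := by
  classical
  have hex : ∃ n, ∃ q : G.Walk u v, q.length = n ∧ ∀ z ∈ q.support, z ∈ S := ⟨_, p, rfl, hp⟩
  obtain ⟨q, hqlen, hqS⟩ := Nat.find_spec hex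
  have hmin : ∀ q' : G.Walk u v, (∀ z ∈ q'.support, z ∈ S) → q.length ≤ q'.length :=
    fun q' hq' => hqlen ▸ Nat.find_min' hex ⟨q', rfl, hq'⟩
  have hdetour : ∀ i j, i ≤ j → j ≤ q.length → ∀ w : G.Walk (q.getVert i) (q.getVert j),
      (∀ z ∈ w.support, z ∈ S) → j - i ≤ w.length := by
    intro i j hij hj w hw
    have := hmin ((q.take i).append (w.append (q.drop j))) fun z hz => by
      rw [mem_support_append_iff, mem_support_append_iff, support_take,
        drop_support_eq_support_drop_min] at hz
      rcases hz with hz | hz | hz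
      exacts [hqS z (List.mem_of_mem_take hz), hw z hz, hqS z (List.mem_of_mem_drop hz)]
    simp only [length_append, take_length, drop_length] at this
    omega
  have hgetVert : ∀ i, q.getVert i ∈ S := fun i => hqS _ (q.getVert_mem_support i)
  refine ⟨q, hqS, (IsPath.getVert_injOn_iff q).1 fun i hi j hj hij => ?_, fun i j hij hj hadj => ?_⟩
  · have hdet : ∀ i j, i ≤ j → j ≤ q.length → q.getVert i = q.getVert j → i = j :=
      fun i j hij hj heq => by
        have := hdetour i j hij hj (nil.copy rfl heq) (by simpa using hgetVert i)
        simp only [length_copy, length_nil] at this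
        omega
    rcases le_total i j with h | h
    exacts [hdet i j h hj hij, (hdet j i h hi hij.symm).symm]
  · have := hdetour i j (by omega) hj hadj.toWalk (by simp [hgetVert])
    simp only [Adj.length_toWalk] at this
    omega

theorem IsPath.getVert_mem_of_lt {A : Set V} {u v : V} {p : G.Walk u v} (hp : p.IsPath)
    (hA : ∀ z ∈ p.support, z ∈ insert u (insert v A)) {i : ℕ} (h₀ : 0 < i)
    (hi : i < p.length) : p.getVert i ∈ A := by
  rcases hA _ (p.getVert_mem_support i) with h | h | h
  · exact absurd ((hp.getVert_eq_start_iff hi.le).1 h) h₀.ne'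
  · exact absurd ((hp.getVert_eq_end_iff hi.le).1 h) hi.ne
  · exact h

theorem two_le_length_of_not_adj {u v : V} (p : G.Walk u v) (hne : u ≠ v) (hadj : ¬G.Adj u v) :
    2 ≤ p.length := by
  by_contra! h
  interval_cases hp : p.length
  exacts [hne (eq_of_length_eq_zero hp), hadj (adj_of_length_eq_one hp)]

end Walk

theorem isHoleEmb_of_closed_walk {u : V} (c : G.Walk u u) (hc : 4 ≤ c.length)
    (hinj : ∀ i j, i < j → j < c.length → c.getVert i ≠ c.getVert j)
    (hchord : ∀ i j, i + 1 < j → j < c.length → G.Adj (c.getVert i) (c.getVert j) →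
      i = 0 ∧ j + 1 = c.length) :
    IsHoleEmb G c.length fun k => c.getVert k.val := by
  set n := c.length with hn
  have : NeZero n := ⟨by omega⟩
  have hsucc : ∀ k l : ZMod n, k = l + 1 ↔ k.val = (l.val + 1) % n := fun k l => by
    rw [← ZMod.val_one'' (by omega : n ≠ 1), ← ZMod.val_add, ZMod.val_injective n |>.eq_iff]
  have hsucc_adj : ∀ j < n, G.Adj (c.getVert j) (c.getVert ((j + 1) % n)) := fun j hj => by
    rcases Nat.lt_or_ge (j + 1) n with h | h
    · rw [Nat.mod_eq_of_lt h]
      exact c.adj_getVert_succ hj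
    · have hj1 : j + 1 = n := by omega
      have := c.adj_getVert_succ hj
      rw [hj1, hn, c.getVert_length] at this
      rwa [hj1, Nat.mod_self, c.getVert_zero]
  have hadj_succ : ∀ i j, i < j → j < n → G.Adj (c.getVert i) (c.getVert j) →
      i = (j + 1) % n ∨ j = (i + 1) % n := fun i j hij hj hadj => by
    rcases Nat.lt_or_ge (i + 1) j with h | h
    · obtain ⟨rfl, hj1⟩ := hchord i j h hj hadj
      left
      rw [hj1, Nat.mod_self]
    · right
      rw [Nat.mod_eq_of_lt (by omega)]
      omega
  refine ⟨hc, fun k l hkl => ZMod.val_injective n ?_, fun k l => ?_⟩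
  · by_contra hne
    rcases Nat.lt_or_gt_of_ne hne with h | h
    exacts [hinj _ _ h (ZMod.val_lt l) hkl, hinj _ _ h (ZMod.val_lt k) hkl.symm]
  · dsimp only
    rw [hsucc, hsucc]
    have hk := ZMod.val_lt k
    have hl := ZMod.val_lt l
    constructor
    · intro hadj
      rcases lt_trichotomy k.val l.val with h | h | h
      · exact hadj_succ _ _ h hl hadj
      · exact absurd hadj (h ▸ G.irrefl)
      · exact (hadj_succ _ _ h hk hadj.symm).symm
    · rintro (h | h)
      · exact h ▸ (hsucc_adj _ hl).symm
      · exact h ▸ hsucc_adj _ hk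

theorem Walk.IsInducedPath.isHoleEmb_append {A B : Set V} {u v : V} {q : G.Walk u v}
    {r : G.Walk v u} (hq : q.IsInducedPath) (hr : r.IsInducedPath) (hq₂ : 2 ≤ q.length)
    (hr₂ : 2 ≤ r.length) (hqA : ∀ i, 0 < i → i < q.length → q.getVert i ∈ A)
    (hrB : ∀ j, 0 < j → j < r.length → r.getVert j ∈ B) (hAB : Disjoint A B)
    (hnadj : ∀ a ∈ A, ∀ b ∈ B, ¬G.Adj a b) :
    IsHoleEmb G (q.append r).length fun k => (q.append r).getVert k.val := by
  set c := q.append r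
  have hlen : c.length = q.length + r.length := Walk.length_append q r
  have hcq : ∀ k ≤ q.length, c.getVert k = q.getVert k := fun k hk => by
    simp [c, Walk.getVert_append', hk]
  have hcr : ∀ k, q.length ≤ k → c.getVert k = r.getVert (k - q.length) := fun k hk => by
    simp [c, Walk.getVert_append, not_lt.2 hk]
  have hcross : ∀ i j, i < q.length → q.length < j → j < c.length →
      c.getVert i ≠ c.getVert j ∧
        (G.Adj (c.getVert i) (c.getVert j) → i = 0 ∧ j + 1 = c.length) := by
    intro i j hi hqj hj
    rw [hcq i hi.le, hcr j hqj.le]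
    rcases Nat.eq_zero_or_pos i with rfl | hi₀
    · rw [q.getVert_zero]
      refine ⟨fun h => ?_, fun h => ⟨rfl, ?_⟩⟩
      · have := hr.1.getVert_injOn (show r.length ≤ r.length from le_rfl)
          (show j - q.length ≤ r.length by omega) (r.getVert_length.trans h)
        omega
      · have h' : G.Adj (r.getVert (j - q.length)) (r.getVert r.length) := by
          rw [r.getVert_length]
          exact h.symm
        by_contra hne
        exact hr.2 (j - q.length) r.length (by omega) le_rfl h'
    · have ha := hqA i hi₀ hi
      have hb := hrB (j - q.length) (by omega) (by omega)
      exact ⟨fun h => Set.disjoint_left.1 hAB ha (h ▸ hb), fun h => (hnadj _ ha _ hb h).elim⟩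
  refine isHoleEmb_of_closed_walk c (by omega) (fun i j hij hj heq => ?_)
    (fun i j hij hj hadj => ?_)
  · rcases le_or_gt j q.length with hjq | hqj
    · rw [hcq i (by omega), hcq j hjq] at heq
      exact hij.ne (hq.1.getVert_injOn (show i ≤ q.length by omega) hjq heq)
    rcases le_or_gt q.length i with hqi | hiq
    · rw [hcr i hqi, hcr j hqj.le] at heq
      have := hr.1.getVert_injOn (show i - q.length ≤ r.length by omega)
        (show j - q.length ≤ r.length by omega) heq
      omega
    · exact (hcross i j hiq hqj hj).1 heq
  · rcases le_or_gt j q.length with hjq | hqj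
    · rw [hcq i (by omega), hcq j hjq] at hadj
      exact (hq.2 i j hij hjq hadj).elim
    rcases le_or_gt q.length i with hqi | hiq
    · rw [hcr i hqi, hcr j hqj.le] at hadj
      exact (hr.2 (i - q.length) (j - q.length) (by omega) (by omega) hadj).elim
    · exact (hcross i j hiq hqj hj).2 hadj

theorem containsClock_of_walks {A B : Set V} {u v x : V} (hAB : Disjoint A B)
    (hnadj : ∀ a ∈ A, ∀ b ∈ B, ¬G.Adj a b) (hne : u ≠ v) (huv : ¬G.Adj u v)
    (hxu : G.Adj x u) (hxv : G.Adj x v) (hxA : x ∉ A) (hxB : x ∉ B)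
    (p : G.Walk u v) (hp : ∀ z ∈ p.support, z ∈ insert u (insert v A))
    (p' : G.Walk v u) (hp' : ∀ z ∈ p'.support, z ∈ insert v (insert u B)) :
    ContainsClock G := by
  obtain ⟨q, hqS, hq⟩ := p.exists_isInducedPath_within hp
  obtain ⟨r, hrS, hr⟩ := p'.exists_isInducedPath_within hp'
  have hq₂ := q.two_le_length_of_not_adj hne huv
  have hr₂ := r.two_le_length_of_not_adj hne.symm fun h => huv h.symm
  set c := q.append r
  have hlen : c.length = q.length + r.length := Walk.length_append q r
  have hx : ∀ k, x ≠ c.getVert k := by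
    intro k hk
    have := c.getVert_mem_support k
    rw [← hk, Walk.mem_support_append_iff] at this
    rcases this with h | h
    · rcases hqS x h with rfl | rfl | h
      exacts [G.irrefl hxu, G.irrefl hxv, hxA h]
    · rcases hrS x h with rfl | rfl | h
      exacts [G.irrefl hxv, G.irrefl hxu, hxB h]
  have hcv : c.getVert q.length = v := by simp [c, Walk.getVert_append']
  have hqval : (q.length : ZMod c.length).val = q.length := ZMod.val_natCast_of_lt (by omega)
  refine ⟨c.length, _, x,
    hq.isHoleEmb_append hr hq₂ hr₂ (fun i h₀ hi => hq.1.getVert_mem_of_lt hqS h₀ hi)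
      (fun j h₀ hj => hr.1.getVert_mem_of_lt hrS h₀ hj) hAB hnadj,
    fun k => hx k.val, 0, q.length, ?_⟩
  rw [ZMod.val_zero, hqval, c.getVert_zero, hcv]
  exact ⟨hxu, hxv, hne, huv⟩

theorem exists_walk_through {A : Set V} (hA : (G.induce A).Preconnected) {u v a₁ a₂ : V}
    (ha₁ : a₁ ∈ A) (ha₂ : a₂ ∈ A) (hu : G.Adj u a₁) (hv : G.Adj a₂ v) :
    ∃ p : G.Walk u v, ∀ z ∈ p.support, z ∈ insert u (insert v A) := by
  obtain ⟨p, hp⟩ := (reachable_induce_iff ha₁ ha₂).1 (hA _ _)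
  refine ⟨.cons hu (p.concat hv), fun z hz => ?_⟩
  rw [Walk.support_cons, Walk.support_concat, List.mem_cons, List.mem_append,
    List.mem_singleton] at hz
  rcases hz with rfl | hz | rfl
  · exact Set.mem_insert _ _
  · exact Set.mem_insert_of_mem _ (Set.mem_insert_of_mem _ (hp z hz))
  · exact Set.mem_insert_of_mem _ (Set.mem_insert _ _)

theorem ClockFree.isClique_of_isFullSeparation (hG : ClockFree G) {x : V} {Y A B : Set V}
    (hxY : x ∈ Y) (hstar : ∀ y ∈ Y, y = x ∨ G.Adj x y) (h : G.IsFullSeparation x Y A B) :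
    G.IsClique Y := by
  intro u hu v hv hne
  by_contra huv
  have hux : u ≠ x := by
    rintro rfl
    rcases hstar v hv with rfl | h
    exacts [hne rfl, huv h]
  have hvx : v ≠ x := by
    rintro rfl
    rcases hstar u hu with rfl | h
    exacts [hne rfl, huv h.symm]
  have hxu : G.Adj x u := (hstar u hu).resolve_left hux
  have hxv : G.Adj x v := (hstar v hv).resolve_left hvx
  obtain ⟨⟨-, a₁, ha₁, hau⟩, -, b₁, hb₁, hbu⟩ := h.full ⟨hu, hux⟩
  obtain ⟨⟨-, a₂, ha₂, hav⟩, -, b₂, hb₂, hbv⟩ := h.full ⟨hv, hvx⟩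
  obtain ⟨p, hp⟩ := exists_walk_through h.left_preconnected ha₁ ha₂ hau.symm hav
  obtain ⟨p', hp'⟩ := exists_walk_through h.right_preconnected hb₂ hb₁ hbv.symm hbu
  exact hG (containsClock_of_walks h.disjoint h.not_adj hne huv hxu hxv
    (fun hxA => h.left_subset hxA hxY) (fun hxB => h.right_subset hxB hxY) p hp p' hp')

end SimpleGraph

/-- If a clock-free graph admits a star cutset, then it admits a clique cutset. -/
theorem clockFree_star_cutset_to_clique_cutset (G : SimpleGraph V)
    (hG : ClockFree G) (h : HasStarCutset G) : HasCliqueCutset G := by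
  obtain ⟨X, hX, x, hxX, hstar⟩ := h
  obtain ⟨Y, hYX, hxY, hY, A, B, hsep⟩ := hX.exists_isFullSeparation hxX
  exact ⟨Y, hY, hG.isClique_of_isFullSeparation hxY (fun y hy => hstar y (hYX hy)) hsep⟩
end

section
/- Let G be a graph, w a weight function on G, and c ∈ [1/2, 1). Being a (w,G)-shield is a strict partial order (irreflexive and transitive) on any collection of subsets of V(G), none of which is a (w, 1/2)-balanced separator of G. -/
open SimpleGraph

variable {V : Type*}

lemma comp_subset_aux {G : SimpleGraph V} {S D D' : Set V}
    (hD : IsComponentOf G S D) (hD' : IsComponentOf G S D')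
    {v : V} (hv : v ∈ D) (hv' : v ∈ D') : D ⊆ D' := by
  intro u hu
  obtain ⟨hne, hsub, hconn, hanti⟩ := hD
  obtain ⟨p⟩ := hconn ⟨v, hv⟩ ⟨u, hu⟩
  have key : ∀ (a b : D) (_ : (G.induce D).Walk a b), (a : V) ∈ D' → (b : V) ∈ D' := by
    intro a b q
    induction q with
    | nil => exact id
    | @cons a m b h q ih =>
      intro ha
      apply ih
      by_contra hc
      exact hD'.2.2.2 _ ha _ (hsub m.2) hc h
  exact key _ _ p hv'

lemma heavy_unique [Fintype V] {G : SimpleGraph V} {w : V → ℝ} (hw : IsWeightFun w)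
    {S B B' : Set V} (hB : IsComponentOf G S B) (hB' : IsComponentOf G S B')
    (h1 : 1/2 < wSum w B) (h2 : 1/2 < wSum w B') : B = B' := by
  by_contra hne
  have hdisj : ∀ v, v ∈ B → v ∉ B' := by
    intro v hv hv'
    exact hne (subset_antisymm (comp_subset_aux hB hB' hv hv')
      (comp_subset_aux hB' hB hv' hv))
  have hle : wSum w B + wSum w B' ≤ 1 := by
    rw [← hw.2]
    unfold wSum
    rw [← Finset.sum_add_distrib]
    apply Finset.sum_le_sum
    intro v _
    by_cases h : v ∈ B
    · rw [Set.indicator_of_mem h, Set.indicator_of_notMem (hdisj v h)]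
      simp
    · rw [Set.indicator_of_notMem h]
      by_cases h' : v ∈ B'
      · rw [Set.indicator_of_mem h']; simp
      · rw [Set.indicator_of_notMem h']; simpa using (hw.1 v).1
  linarith

/-- Being a `(w,G)`-shield is a strict partial order (irreflexive and transitive) on
any collection of subsets of `V(G)` none of which is a `(w,1/2)`-balanced separator. -/
theorem shield_strict_partial_order [Fintype V] (G : SimpleGraph V)
    (w : V → ℝ) (hw : IsWeightFun w) (c : ℝ) (hc : 1/2 ≤ c ∧ c < 1)
    (𝓧 : Set (Set V)) (h𝓧 : ∀ X ∈ 𝓧, ¬ IsBalancedSep G w (1/2) X) :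
    (∀ X ∈ 𝓧, ¬ IsShield G w X X) ∧
    (∀ X ∈ 𝓧, ∀ Y ∈ 𝓧, ∀ Z ∈ 𝓧,
      IsShield G w X Y → IsShield G w Y Z → IsShield G w X Z) := by
  constructor
  · rintro X _ ⟨B, B', hB, h1, hB', h2, hcase⟩
    have hEq : B = B' := heavy_unique hw hB hB' h1 h2
    subst hEq
    rcases hcase with h | ⟨_, h⟩
    · exact h.2 h.1
    · exact h.2 h.1
  · rintro X _ Y _ Z _ ⟨B1, B2, hB1, w1, hB2, w2, hXY⟩ ⟨B2', B3, hB2', w2', hB3, w3, hYZ⟩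
    have hEq : B2 = B2' := heavy_unique hw hB2 hB2' w2 w2'
    subst hEq
    refine ⟨B1, B3, hB1, w1, hB3, w3, ?_⟩
    rcases hXY with h1 | ⟨e1, s1⟩
    · rcases hYZ with h2 | ⟨e2, s2⟩
      · exact Or.inl (h1.trans h2)
      · exact Or.inl (e2 ▸ h1)
    · rcases hYZ with h2 | ⟨e2, s2⟩
      · exact Or.inl (e1 ▸ h2)
      · exact Or.inr ⟨e1.trans e2, s2.trans s1⟩
end

section
/- Let G be a graph and w a weight function on G. Let 𝒳 be a set of subsets of V(G), none of which is a (w,1/2)-balanced separator, and suppose that for all X, X' ∈ 𝒳 the canonical separations S_{w,G}(X) and S_{w,G}(X') are loosely non-crossing. Then for every connected component D of G \ β(G, w, 𝒳), there exists X ∈ 𝒳 such that D ⊆ A, where (A, C, B) = S_{w,G}(X). -/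
open SimpleGraph

variable {V : Type*}

/-! A component `D` of `G \ β` is connected and covered by the small sides `A` of the canonical
separations. Grow a connected `K ⊆ D` inside one side `A` as large as possible. If `K ≠ D`, some
`v ∈ D \ K` is adjacent to `K`; then `v ∈ C`, and `v` lies in another side `A'` which cannot contain
all of `K`. Leaving `A'` for the first time along a walk from `v` into `K` yields a vertex
`c ∈ K ∩ C'`, and the walk back from `c` to `v` witnesses that the two separations cross loosely. -/

namespace SimpleGraph

variable {G : SimpleGraph V}

lemma Preconnected.exists_walk_of_induce {s : Set V} (h : (G.induce s).Preconnected)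
    {a b : V} (ha : a ∈ s) (hb : b ∈ s) : ∃ p : G.Walk a b, ∀ x ∈ p.support, x ∈ s := by
  obtain ⟨q⟩ := h ⟨a, ha⟩ ⟨b, hb⟩
  have hq : ∀ x ∈ (q.map (Embedding.induce s).toHom).support, x ∈ s := by
    intro x hx
    rw [Walk.support_map, List.mem_map] at hx
    obtain ⟨⟨y, hy⟩, -, rfl⟩ := hx
    exact hy
  exact ⟨_, hq⟩

lemma connected_induce_insert_of_adj {K : Set V} (hK : (G.induce K).Preconnected)
    {u v : V} (hu : u ∈ K) (huv : G.Adj u v) : (G.induce (insert v K)).Connected := by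
  rw [← Set.union_singleton]
  exact connected_induce_union hK (by rw [induce_singleton_eq_top]; exact preconnected_top)
    hu rfl huv

lemma Walk.exists_first_exit {S : Set V} {a b : V} (p : G.Walk a b) (ha : a ∈ S) (hb : b ∉ S) :
    ∃ y c, G.Adj y c ∧ c ∉ S ∧ c ∈ p.support ∧
      ∃ q : G.Walk a y, ∀ x ∈ q.support, x ∈ S ∧ x ∈ p.support := by
  induction p with
  | nil => exact absurd ha hb
  | @cons a a' b h p ih =>
    by_cases ha' : a' ∈ S
    · obtain ⟨y, c, hyc, hc, hcp, q, hq⟩ := ih ha' hb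
      refine ⟨y, c, hyc, hc, by simp [hcp], .cons h q, fun x hx => ?_⟩
      rcases (Walk.mem_support_iff _).1 hx with rfl | hx
      · simp [ha]
      · simpa using And.imp_right Or.inr (hq x hx)
    · exact ⟨a, a', h, ha', by simp, .nil, by simp [ha]⟩

lemma _root_.IsComponentOf.neighborSet_subset {X B : Set V} (hB : IsComponentOf G Xᶜ B) {a : V}
    (ha : a ∉ B ∪ X) : G.neighborSet a ⊆ (B ∪ X)ᶜ ∪ X := by
  intro b hab
  by_contra hb
  obtain ⟨hbBX, hbX⟩ := not_or.1 hb
  exact hB.2.2.2 b ((Set.not_notMem.1 hbBX).resolve_right hbX) a (fun h => ha (Or.inr h))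
    (fun h => ha (Or.inl h)) hab.symm

lemma not_looselyNonCrossing_of_adj {A C A' C' K : Set V}
    (hA' : ∀ a ∈ A', G.neighborSet a ⊆ A' ∪ C') (hK : (G.induce K).Preconnected) (hKA : K ⊆ A)
    {u v x : V} (hu : u ∈ K) (huv : G.Adj u v) (hvC : v ∈ C) (hvA' : v ∈ A') (hx : x ∈ K)
    (hxA' : x ∉ A') : ¬ LooselyNonCrossing G A C A' C' := by
  classical
  obtain ⟨p, hp⟩ := (connected_induce_insert_of_adj hK hu huv).preconnected.exists_walk_of_induce
    (Set.mem_insert v K) (Set.mem_insert_of_mem v hx)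
  obtain ⟨y, c, hyc, hcA', hcp, q, hq⟩ := p.exists_first_exit hvA' hxA'
  have hcK : c ∈ K := (hp c hcp).resolve_left fun h => hcA' (h ▸ hvA')
  have hcC' : c ∈ C' := (hA' y (hq y q.end_mem_support).1 hyc).resolve_left hcA'
  have hq' : ∀ t ∈ q.reverse.bypass.support, t ∈ A' ∧ t ∈ p.support := fun t ht =>
    hq t (by simpa using q.reverse.support_bypass_subset_support ht)
  refine not_not.2 ⟨c, v, .cons hyc.symm q.reverse.bypass, ?_, ⟨hKA hcK, hcC'⟩, ⟨hvA', hvC⟩, ?_⟩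
  · exact (Walk.cons_isPath_iff _ _).2
      ⟨Walk.bypass_isPath _, fun hc => hcA' (hq' c hc).1⟩
  · intro t ht htc htv
    have ht' := hq' t (((Walk.mem_support_iff _).1 ht).resolve_left htc)
    exact ⟨hKA ((hp t ht'.2).resolve_left htv), ht'.1⟩

theorem exists_subset_fst_of_looselyNonCrossing [Finite V] {𝒮 : Set (Set V × Set V)}
    (hsep : ∀ S ∈ 𝒮, ∀ a ∈ S.1, G.neighborSet a ⊆ S.1 ∪ S.2)
    (hcross : ∀ S ∈ 𝒮, ∀ T ∈ 𝒮, LooselyNonCrossing G S.1 S.2 T.1 T.2)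
    {D : Set V} (hD : (G.induce D).Connected) (hcover : ∀ d ∈ D, ∃ S ∈ 𝒮, d ∈ S.1) :
    ∃ S ∈ 𝒮, D ⊆ S.1 := by
  set 𝒯 := {K | K ⊆ D ∧ (G.induce K).Connected ∧ ∃ S ∈ 𝒮, K ⊆ S.1}
  obtain ⟨d, hd⟩ := hD.nonempty
  obtain ⟨S₀, hS₀, hdS₀⟩ := hcover d hd
  have h𝒯 : {d} ∈ 𝒯 := ⟨by simpa, by simp, S₀, hS₀, by simpa⟩
  obtain ⟨K, ⟨hKD, hK, S, hS, hKS⟩, hKmax⟩ :=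
    Set.exists_max_image 𝒯 Set.ncard (Set.toFinite 𝒯) ⟨_, h𝒯⟩
  suffices hDK : D ⊆ K from ⟨S, hS, hDK.trans hKS⟩
  intro z hzD
  by_contra hzK
  obtain ⟨k, hk⟩ := hK.nonempty
  obtain ⟨p, hp⟩ := hD.preconnected.exists_walk_of_induce (hKD hk) hzD
  obtain ⟨u, v, huv, hvK, hvp, q, hq⟩ := p.exists_first_exit hk hzK
  have hu : u ∈ K := (hq u q.end_mem_support).1
  have hvD : v ∈ D := hp v hvp
  have grow : ∀ T ∈ 𝒮, ¬ insert v K ⊆ T.1 := fun T hT hvKT => by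
    have := hKmax _ ⟨Set.insert_subset hvD hKD,
      connected_induce_insert_of_adj hK.preconnected hu huv, T, hT, hvKT⟩
    rw [Set.ncard_insert_of_notMem hvK (Set.toFinite K)] at this
    omega
  have hvS : v ∉ S.1 := fun h => grow S hS (Set.insert_subset h hKS)
  obtain ⟨T, hT, hvT⟩ := hcover v hvD
  obtain ⟨x, hxK, hxT⟩ : ∃ x ∈ K, x ∉ T.1 := by
    by_contra! h
    exact grow T hT (Set.insert_subset hvT h)
  exact not_looselyNonCrossing_of_adj (hsep T hT) hK.preconnected hKS hu huv
    ((hsep S hS u (hKS hu) huv).resolve_left hvS) hvT hxK hxT (hcross S hS T hT)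

end SimpleGraph

theorem central_bag_components_general [Fintype V] (G : SimpleGraph V)
    (w : V → ℝ) (𝓧 : Set (Set V))
    (hcross : ∀ X ∈ 𝓧, ∀ X' ∈ 𝓧, ∀ B B' : Set V,
      IsComponentOf G (Xᶜ) B → 1/2 < wSum w B →
      IsComponentOf G (X'ᶜ) B' → 1/2 < wSum w B' →
      LooselyNonCrossing G ((B ∪ X)ᶜ) X ((B' ∪ X')ᶜ) X')
    (D : Set V) (hD : IsComponentOf G ((CentralBag G w 𝓧)ᶜ) D) :
    ∃ X ∈ 𝓧, ∃ B : Set V, IsComponentOf G (Xᶜ) B ∧ 1/2 < wSum w B ∧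
      D ⊆ (B ∪ X)ᶜ := by
  set 𝒮 : Set (Set V × Set V) :=
    {S | ∃ X ∈ 𝓧, ∃ B, IsComponentOf G Xᶜ B ∧ 1/2 < wSum w B ∧ S = ((B ∪ X)ᶜ, X)}
  have hsep : ∀ S ∈ 𝒮, ∀ a ∈ S.1, G.neighborSet a ⊆ S.1 ∪ S.2 := by
    rintro _ ⟨X, -, B, hB, -, rfl⟩ a ha
    exact hB.neighborSet_subset ha
  have hcover : ∀ d ∈ D, ∃ S ∈ 𝒮, d ∈ S.1 := by
    intro d hd
    by_contra! h
    exact hD.2.1 hd fun X hX B hB hBw => by_contra (h _ ⟨X, hX, B, hB, hBw, rfl⟩)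
  have hcross' : ∀ S ∈ 𝒮, ∀ T ∈ 𝒮, LooselyNonCrossing G S.1 S.2 T.1 T.2 := by
    rintro _ ⟨X, hX, B, hB, hBw, rfl⟩ _ ⟨X', hX', B', hB', hB'w, rfl⟩
    exact hcross X hX X' hX' B B' hB hBw hB' hB'w
  obtain ⟨_, ⟨X, hX, B, hB, hBw, rfl⟩, hDS⟩ :=
    G.exists_subset_fst_of_looselyNonCrossing hsep hcross' hD.2.2.1 hcover
  exact ⟨X, hX, B, hB, hBw, hDS⟩

/-- Lemma 5.3: if the canonical separations of the members of `𝒳` are pairwise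
loosely non-crossing, then every component of `G \ β(G,w,𝒳)` is contained in the
`A`-side of the canonical separation of some `X ∈ 𝒳`. -/
theorem central_bag_components [Fintype V] (G : SimpleGraph V)
    (w : V → ℝ) (hw : IsWeightFun w) (𝓧 : Set (Set V))
    (h𝓧 : ∀ X ∈ 𝓧, ¬ IsBalancedSep G w (1/2) X)
    (hcross : ∀ X ∈ 𝓧, ∀ X' ∈ 𝓧, ∀ B B' : Set V,
      IsComponentOf G (Xᶜ) B → 1/2 < wSum w B →
      IsComponentOf G (X'ᶜ) B' → 1/2 < wSum w B' →
      LooselyNonCrossing G ((B ∪ X)ᶜ) X ((B' ∪ X')ᶜ) X')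
    (D : Set V) (hD : IsComponentOf G ((CentralBag G w 𝓧)ᶜ) D) :
    ∃ X ∈ 𝓧, ∃ B : Set V, IsComponentOf G (Xᶜ) B ∧ 1/2 < wSum w B ∧
      D ⊆ (B ∪ X)ᶜ :=
  central_bag_components_general G w 𝓧 hcross D hD
end

section
/- Let G be a (clock, diamond)-free graph with no star cutset, and let K1, K2 be disjoint cliques such that K1 ∪ K2 is a cutset of G. Then no vertex of K1 has two or more neighbours in K2, and no vertex of K2 has two or more neighbours in K1. -/
open SimpleGraph

variable {V : Type*}

lemma key_aux (G : SimpleGraph V)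
    (hdia : DiamondFree G) (hstar : ¬ HasStarCutset G)
    (K₁ K₂ : Set V) (h₁ : G.IsClique K₁) (h₂ : G.IsClique K₂)
    (hdisj : Disjoint K₁ K₂) (hcut : IsCutset G (K₁ ∪ K₂)) :
    ∀ v ∈ K₁, ∀ x ∈ K₂, ∀ y ∈ K₂, x ≠ y → G.Adj v x → G.Adj v y → False := by
  intro v hv x hx y hy hxy hvx hvy
  have hall : ∀ z ∈ K₂, G.Adj v z := by
    intro z hz
    by_contra hvz
    have hzx : z ≠ x := fun h => hvz (h ▸ hvx)
    have hzy : z ≠ y := fun h => hvz (h ▸ hvy)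
    have hvz' : v ≠ z := fun h => (hdisj.ne_of_mem hv hz) h
    refine hdia ⟨x, y, v, z, hxy, hvx.ne', hzx.symm, hvy.ne', hzy.symm, hvz',
      h₂ hx hy hxy, hvx.symm, h₂ hx hz hzx.symm, hvy.symm, h₂ hy hz hzy.symm, hvz⟩
  exact hstar ⟨K₁ ∪ K₂, hcut, v, Or.inl hv, by
    rintro w (hw | hw)
    · by_cases h : w = v
      · exact Or.inl h
      · exact Or.inr (h₁ hv hw (Ne.symm h))
    · exact Or.inr (hall w hw)⟩

/-- In a (clock, diamond)-free graph with no star cutset, if the union of two disjoint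
cliques `K₁ ∪ K₂` is a cutset, then no vertex of either clique has two or more
neighbours in the other. -/
theorem two_clique_cutset_matching (G : SimpleGraph V)
    (hclock : ClockFree G) (hdia : DiamondFree G) (hstar : ¬ HasStarCutset G)
    (K₁ K₂ : Set V) (h₁ : G.IsClique K₁) (h₂ : G.IsClique K₂)
    (hdisj : Disjoint K₁ K₂) (hcut : IsCutset G (K₁ ∪ K₂)) :
    (∀ v ∈ K₁, ∀ x ∈ K₂, ∀ y ∈ K₂, x ≠ y → G.Adj v x → G.Adj v y → False) ∧
    (∀ v ∈ K₂, ∀ x ∈ K₁, ∀ y ∈ K₁, x ≠ y → G.Adj v x → G.Adj v y → False) := by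
  constructor
  · exact key_aux G hdia hstar K₁ K₂ h₁ h₂ hdisj hcut
  · exact key_aux G hdia hstar K₂ K₁ h₂ h₁ hdisj.symm (Set.union_comm K₁ K₂ ▸ hcut)
end
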